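/- arXiv:1512.03522 — 6 statements merged into one kernel-verified Lean document; each statement's English description precedes it below -/
import Mathlib

section
/- For every i = 1, …, m+1 one has (Ĉ_i/β̂_i) · ∑_{j=1}^{n+1} D̂_j/(β̂_i + γ̂_j) = [ ∏_{k=1}^{m}(η_k − β̂_i) · ∏_{k=1, k≠i}^{m+1} β̂_k · ∏_{k=1}^{n}(β̂_i + ϑ_k) · ∏_{k=1}^{n+1} γ̂_k ] / [ ∏_{k=1}^{m} η_k · ∏_{k=1, k≠i}^{m+1}(β̂_k − β̂_i) · ∏_{k=1}^{n} ϑ_k · ∏_{k=1}^{n+1}(β̂_i + γ̂_k) ]. -/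
open Finset Polynomial Function

/-!
Up to the factor `∏ γ̂ / ∏ ϑ`, the coefficient `D̂_j / (x + γ̂_j)` is the term at the simple pole
`x = -γ̂_j` of the partial fraction expansion of `∏ (x + ϑ_k) / ∏ (x + γ̂_k)`, which is Lagrange
interpolation of the numerator (of degree `n`) at the `n + 1` distinct nodes `-γ̂_j`. Summing over
`j` thus gives `(∏ γ̂ / ∏ ϑ) · ∏ (β̂_i + ϑ_k) / ∏ (β̂_i + γ̂_k)`, and `Ĉ_i / β̂_i` factors in the
same way.
-/

theorem Lagrange.eval_eq_eval_nodal_mul_sum {F ι : Type*} [Field F] [DecidableEq ι]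
    {s : Finset ι} {v : ι → F} {f : F[X]} (hvs : Set.InjOn v s) (hf : f.degree < #s) {x : F}
    (hx : ∀ i ∈ s, x ≠ v i) :
    f.eval x = (Lagrange.nodal s v).eval x *
      ∑ i ∈ s, Lagrange.nodalWeight s v i * (x - v i)⁻¹ * f.eval (v i) := by
  conv_lhs => rw [Lagrange.eq_interpolate hvs hf]
  exact Lagrange.eval_interpolate_not_at_node _ hx

theorem sum_prod_sub_div_eq_prod_add_div_prod_add {F ι κ : Type*} [Field F] [Fintype ι]
    [DecidableEq ι] [Fintype κ] (hcard : Fintype.card κ < Fintype.card ι) {γ : ι → F}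
    (hγ : Injective γ) (ϑ : κ → F) {x : F} (hx : ∀ j, x + γ j ≠ 0) :
    ∑ j, (∏ k, (ϑ k - γ j)) / ((x + γ j) * ∏ k ∈ univ.erase j, (γ k - γ j)) =
      (∏ k, (x + ϑ k)) / ∏ k, (x + γ k) := by
  have hdeg : (Lagrange.nodal univ (-ϑ)).degree < #(univ : Finset ι) := by
    rw [Lagrange.degree_nodal]; exact_mod_cast hcard
  have hx' : ∀ j ∈ univ, x ≠ (-γ) j := fun j _ h => hx j (by simp [h])
  have h := Lagrange.eval_eq_eval_nodal_mul_sum (neg_injective.comp hγ).injOn hdeg hx'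
  simp only [Lagrange.eval_nodal, Lagrange.nodalWeight, Pi.neg_apply, comp_apply,
    sub_neg_eq_add] at h
  have hprod : ∏ k, (x + γ k) ≠ 0 := prod_ne_zero_iff.2 fun k _ => hx k
  rw [h, mul_div_cancel_left₀ _ hprod]
  refine sum_congr rfl fun j _ => ?_
  simp only [prod_inv_distrib, neg_add_eq_sub, mul_inv, div_eq_mul_inv]
  ring

theorem mul_prod_div_mul_prod_erase_div {F ι κ : Type*} [Field F] [Fintype ι] [DecidableEq ι]
    [Fintype κ] (a : ι → F) (b : κ → F) (j : ι) :
    a j * (∏ k, (b k - a j) / b k) * ∏ k ∈ univ.erase j, a k / (a k - a j) =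
      (∏ k, a k) / (∏ k, b k) * ((∏ k, (b k - a j)) / ∏ k ∈ univ.erase j, (a k - a j)) := by
  rw [prod_div_distrib, prod_div_distrib, ← mul_prod_erase univ a (mem_univ j)]
  ring

theorem StrictMono.of_interlacing {α : Type*} [Preorder α] {m : ℕ} {a : Fin (m + 1) → α}
    {b : Fin m → α} (h : ∀ k : Fin m, a k.castSucc < b k ∧ b k < a k.succ) : StrictMono a :=
  Fin.strictMono_iff_lt_succ.2 fun k => (h k).1.trans (h k).2

theorem stmt_6_general (m n : ℕ)
    (η : Fin m → ℝ) (ϑ : Fin n → ℝ)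
    (βh : Fin (m + 1) → ℝ) (γh : Fin (n + 1) → ℝ)
    (hβ0 : 0 < βh 0)
    (hβint : ∀ k : Fin m, βh k.castSucc < η k ∧ η k < βh k.succ)
    (hγ0 : 0 < γh 0)
    (hγint : ∀ k : Fin n, γh k.castSucc < ϑ k ∧ ϑ k < γh k.succ)
    (C : Fin (m + 1) → ℝ)
    (hC : ∀ i, C i = βh i * (∏ k, ((η k - βh i) / η k)) *
      (∏ k ∈ Finset.univ.erase i, (βh k / (βh k - βh i))))
    (D : Fin (n + 1) → ℝ)
    (hD : ∀ j, D j = γh j * (∏ k, ((ϑ k - γh j) / ϑ k)) *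
      (∏ k ∈ Finset.univ.erase j, (γh k / (γh k - γh j)))) :
    ∀ i : Fin (m + 1),
      (C i / βh i) * (∑ j, D j / (βh i + γh j)) =
        ((∏ k, (η k - βh i)) * (∏ k ∈ Finset.univ.erase i, βh k) *
            (∏ k, (βh i + ϑ k)) * (∏ k, γh k)) /
          ((∏ k, η k) * (∏ k ∈ Finset.univ.erase i, (βh k - βh i)) *
            (∏ k, ϑ k) * (∏ k, (βh i + γh k))) := by
  intro i
  have hβ := StrictMono.of_interlacing hβint
  have hγ := StrictMono.of_interlacing hγint
  have hβi : 0 < βh i := hβ0.trans_le (hβ.monotone (Fin.zero_le i))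
  have hβγ : ∀ j, βh i + γh j ≠ 0 := fun j =>
    (add_pos hβi (hγ0.trans_le (hγ.monotone (Fin.zero_le j)))).ne'
  have hsum : ∑ j, D j / (βh i + γh j) = (∏ k, γh k) / (∏ k, ϑ k) *
      ((∏ k, (βh i + ϑ k)) / ∏ k, (βh i + γh k)) := by
    rw [← sum_prod_sub_div_eq_prod_add_div_prod_add (by simp) hγ.injective ϑ hβγ, mul_sum]
    refine sum_congr rfl fun j _ => ?_
    rw [hD, mul_prod_div_mul_prod_erase_div, div_mul_eq_div_div_swap]
    ring
  rw [hsum, hC, mul_prod_div_mul_prod_erase_div, ← mul_prod_erase univ βh (mem_univ i)]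
  field_simp [hβi.ne']

/-- Derivation of the closed form (3.5) of `H_i` from (B.28): with both interlacing
conditions and `Ĉ_i`, `D̂_j` as in Lemma B.2, for every `i = 1, …, m+1`,
`(Ĉ_i/β̂_i) ∑_j D̂_j/(β̂_i + γ̂_j)` equals the stated product/quotient expression. -/
theorem stmt_6 (m n : ℕ) (hm : 1 ≤ m) (hn : 1 ≤ n)
    (η : Fin m → ℝ) (ϑ : Fin n → ℝ)
    (βh : Fin (m + 1) → ℝ) (γh : Fin (n + 1) → ℝ)
    (hβ0 : 0 < βh 0)
    (hβint : ∀ k : Fin m, βh k.castSucc < η k ∧ η k < βh k.succ)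
    (hγ0 : 0 < γh 0)
    (hγint : ∀ k : Fin n, γh k.castSucc < ϑ k ∧ ϑ k < γh k.succ)
    (C : Fin (m + 1) → ℝ)
    (hC : ∀ i, C i = βh i * (∏ k, ((η k - βh i) / η k)) *
      (∏ k ∈ Finset.univ.erase i, (βh k / (βh k - βh i))))
    (D : Fin (n + 1) → ℝ)
    (hD : ∀ j, D j = γh j * (∏ k, ((ϑ k - γh j) / ϑ k)) *
      (∏ k ∈ Finset.univ.erase j, (γh k / (γh k - γh j)))) :
    ∀ i : Fin (m + 1),
      (C i / βh i) * (∑ j, D j / (βh i + γh j)) =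
        ((∏ k, (η k - βh i)) * (∏ k ∈ Finset.univ.erase i, βh k) *
            (∏ k, (βh i + ϑ k)) * (∏ k, γh k)) /
          ((∏ k, η k) * (∏ k ∈ Finset.univ.erase i, (βh k - βh i)) *
            (∏ k, ϑ k) * (∏ k, (βh i + γh k))) :=
  stmt_6_general m n η ϑ βh γh hβ0 hβint hγ0 hγint C hC D hD
end

section
/- For every j = 1, …, n+1 one has D̂_j · ∑_{i=1}^{m+1} Ĉ_i/(β̂_i(β̂_i + γ̂_j)) − D̂_j/γ̂_j = −[ ∏_{k=1}^{n}(ϑ_k − γ̂_j) · ∏_{k=1, k≠j}^{n+1} γ̂_k · ∏_{k=1}^{m}(γ̂_j + η_k) · ∏_{k=1}^{m+1} β̂_k ] / [ ∏_{k=1}^{n} ϑ_k · ∏_{k=1, k≠j}^{n+1}(γ̂_k − γ̂_j) · ∏_{k=1}^{m} η_k · ∏_{k=1}^{m+1}(γ̂_j + β̂_k) ]. -/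
/-!
Write `ρ := ∏ₖ (X + η_k)`, a polynomial of degree `m`, so Lagrange interpolation at the
`m + 1` nodes `-β̂_i` reproduces it. Evaluated at `x`, this says
`∑ᵢ Ĉ_i / (β̂_i + x) = (∏ β̂) ρ(x) / ((∏ η) ∏ₖ (x + β̂_k))`; at `x = 0` the sum is `1`.
The partial fraction `1 / (β(β + γ)) = (1/β - 1/(β + γ)) / γ` turns the left-hand side into
`-D̂_j / γ̂_j` times the sum at `x = γ̂_j`, which is the closed form.
-/

open Finset Polynomial

section Lagrange

variable {F ι κ : Type*} [Field F] [Fintype ι] [DecidableEq ι] [Fintype κ]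

theorem Polynomial.eval_eq_sum_lagrange {v : ι → F} (hv : Function.Injective v) {p : F[X]}
    (hp : p.degree < Fintype.card ι) (x : F) :
    p.eval x = ∑ i, p.eval (v i) * ∏ k ∈ univ.erase i, (x - v k) / (v i - v k) := by
  conv_lhs => rw [Lagrange.eq_interpolate (f := p) (s := univ) hv.injOn (by simpa using hp)]
  simp [Lagrange.interpolate_apply, eval_finsetSum, Lagrange.basis, eval_prod,
    Lagrange.basisDivisor, div_eq_inv_mul]

theorem prod_add_eq_sum_lagrange {β : ι → F} (hβ : Function.Injective β)
    (hcard : Fintype.card κ < Fintype.card ι) (η : κ → F) (x : F) :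
    ∏ k, (x + η k) =
      ∑ i, (∏ k, (η k - β i)) * ∏ k ∈ univ.erase i, (x + β k) / (β k - β i) := by
  have hdeg : (∏ k, (X + C (η k))).degree < (Fintype.card ι : WithBot ℕ) := by
    rw [degree_prod]
    simpa using hcard
  have h := eval_eq_sum_lagrange (neg_injective.comp hβ) hdeg x
  simp only [eval_prod, eval_add, eval_X, eval_C, Function.comp_apply] at h
  rw [h]
  refine sum_congr rfl fun i _ => ?_
  congr 1
  · exact prod_congr rfl fun k _ => by ring
  · exact prod_congr rfl fun k _ => by rw [sub_neg_eq_add, sub_neg_eq_add, neg_add_eq_sub]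

def lagrangeWeight (β : ι → F) (η : κ → F) (i : ι) : F :=
  β i * (∏ k, (η k - β i) / η k) * ∏ k ∈ univ.erase i, β k / (β k - β i)

theorem lagrangeWeight_div_add {β : ι → F} (η : κ → F) {x : F} (hx : ∀ k, x + β k ≠ 0) (i : ι) :
    lagrangeWeight β η i / (β i + x) =
      (∏ k, β k) / ((∏ k, η k) * ∏ k, (x + β k)) *
        ((∏ k, (η k - β i)) * ∏ k ∈ univ.erase i, (x + β k) / (β k - β i)) := by
  have hrest : ∏ k ∈ univ.erase i, (x + β k) ≠ 0 := prod_ne_zero_iff.mpr fun k _ => hx k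
  -- `ring` cannot cancel `∏_{k ≠ i} (x + β k)` nor treat `x + β i` as an atom under `⁻¹`:
  -- insert the quotient by hand and generalize the sum.
  rw [lagrangeWeight, ← mul_prod_erase univ β (mem_univ i),
    ← mul_prod_erase univ (fun k => x + β k) (mem_univ i), prod_div_distrib,
    prod_div_distrib, prod_div_distrib, add_comm (β i) x, ← mul_one (_ / (x + β i)),
    ← div_self hrest]
  generalize x + β i = s
  ring

theorem sum_lagrangeWeight_div_add {β : ι → F} (hβ : Function.Injective β)
    (hcard : Fintype.card κ < Fintype.card ι) (η : κ → F) {x : F} (hx : ∀ k, x + β k ≠ 0) :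
    ∑ i, lagrangeWeight β η i / (β i + x) =
      (∏ k, β k) * (∏ k, (x + η k)) / ((∏ k, η k) * ∏ k, (x + β k)) := by
  simp_rw [lagrangeWeight_div_add η hx, ← mul_sum, ← prod_add_eq_sum_lagrange hβ hcard]
  ring

end Lagrange

theorem strictMono_of_interlacing {α : Type*} [Preorder α] {m : ℕ} {b : Fin (m + 1) → α}
    {e : Fin m → α} (h : ∀ k : Fin m, b k.castSucc < e k ∧ e k < b k.succ) : StrictMono b :=
  Fin.strictMono_iff_lt_succ.mpr fun k => (h k).1.trans (h k).2

theorem stmt_7_general (m n : ℕ)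
    (η : Fin m → ℝ) (ϑ : Fin n → ℝ)
    (βh : Fin (m + 1) → ℝ) (γh : Fin (n + 1) → ℝ)
    (hβ0 : 0 < βh 0)
    (hβint : ∀ k : Fin m, βh k.castSucc < η k ∧ η k < βh k.succ)
    (hγ0 : 0 < γh 0)
    (hγint : ∀ k : Fin n, γh k.castSucc < ϑ k ∧ ϑ k < γh k.succ)
    (C : Fin (m + 1) → ℝ)
    (hC : ∀ i, C i = βh i * (∏ k, ((η k - βh i) / η k)) *
      (∏ k ∈ Finset.univ.erase i, (βh k / (βh k - βh i))))
    (D : Fin (n + 1) → ℝ)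
    (hD : ∀ j, D j = γh j * (∏ k, ((ϑ k - γh j) / ϑ k)) *
      (∏ k ∈ Finset.univ.erase j, (γh k / (γh k - γh j)))) :
    ∀ j : Fin (n + 1),
      D j * (∑ i, C i / (βh i * (βh i + γh j))) - D j / γh j =
        -(((∏ k, (ϑ k - γh j)) * (∏ k ∈ Finset.univ.erase j, γh k) *
            (∏ k, (γh j + η k)) * (∏ k, βh k)) /
          ((∏ k, ϑ k) * (∏ k ∈ Finset.univ.erase j, (γh k - γh j)) *
            (∏ k, η k) * (∏ k, (γh j + βh k)))) := by
  intro j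
  have hβ := strictMono_of_interlacing hβint
  have hβpos : ∀ i, 0 < βh i := fun i => hβ0.trans_le (hβ.monotone (Fin.zero_le i))
  have hγ : 0 < γh j := hγ0.trans_le ((strictMono_of_interlacing hγint).monotone (Fin.zero_le j))
  have hηprod : ∏ k, η k ≠ 0 := prod_ne_zero_iff.mpr fun k _ => ((hβpos _).trans (hβint k).1).ne'
  have hβprod : ∏ k, βh k ≠ 0 := prod_ne_zero_iff.mpr fun k _ => (hβpos k).ne'
  have hcard : Fintype.card (Fin m) < Fintype.card (Fin (m + 1)) := by simp
  have hsum0 := sum_lagrangeWeight_div_add hβ.injective hcard η (x := 0)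
    fun k => by simpa using (hβpos k).ne'
  have hsumγ := sum_lagrangeWeight_div_add hβ.injective hcard η (x := γh j)
    fun k => (add_pos hγ (hβpos k)).ne'
  have hsplit : ∑ i, C i / (βh i * (βh i + γh j)) =
      (∑ i, C i / βh i - ∑ i, C i / (βh i + γh j)) / γh j := by
    rw [← sum_sub_distrib, sum_div]
    refine sum_congr rfl fun i _ => ?_
    have := (hβpos i).ne'
    have := (add_pos (hβpos i) hγ).ne'
    field_simp
    ring
  have hCw : C = lagrangeWeight βh η := funext hC
  simp only [add_zero, zero_add] at hsum0
  rw [hsplit, hCw, hsum0, hsumγ, hD j, prod_div_distrib, prod_div_distrib,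
    mul_comm (∏ k, βh k), div_self (mul_ne_zero hηprod hβprod)]
  field_simp
  ring

/-- Derivation of the closed form (3.5) of `N_j` from (B.28) via (B.30): with both
interlacing conditions and `Ĉ_i`, `D̂_j` as in Lemma B.2, for every `j = 1, …, n+1`,
`D̂_j ∑_i Ĉ_i/(β̂_i(β̂_i + γ̂_j)) − D̂_j/γ̂_j` equals the stated expression. -/
theorem stmt_7 (m n : ℕ) (hm : 1 ≤ m) (hn : 1 ≤ n)
    (η : Fin m → ℝ) (ϑ : Fin n → ℝ)
    (βh : Fin (m + 1) → ℝ) (γh : Fin (n + 1) → ℝ)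
    (hβ0 : 0 < βh 0)
    (hβint : ∀ k : Fin m, βh k.castSucc < η k ∧ η k < βh k.succ)
    (hγ0 : 0 < γh 0)
    (hγint : ∀ k : Fin n, γh k.castSucc < ϑ k ∧ ϑ k < γh k.succ)
    (C : Fin (m + 1) → ℝ)
    (hC : ∀ i, C i = βh i * (∏ k, ((η k - βh i) / η k)) *
      (∏ k ∈ Finset.univ.erase i, (βh k / (βh k - βh i))))
    (D : Fin (n + 1) → ℝ)
    (hD : ∀ j, D j = γh j * (∏ k, ((ϑ k - γh j) / ϑ k)) *
      (∏ k ∈ Finset.univ.erase j, (γh k / (γh k - γh j)))) :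
    ∀ j : Fin (n + 1),
      D j * (∑ i, C i / (βh i * (βh i + γh j))) - D j / γh j =
        -(((∏ k, (ϑ k - γh j)) * (∏ k ∈ Finset.univ.erase j, γh k) *
            (∏ k, (γh j + η k)) * (∏ k, βh k)) /
          ((∏ k, ϑ k) * (∏ k ∈ Finset.univ.erase j, (γh k - γh j)) *
            (∏ k, η k) * (∏ k, (γh j + βh k)))) :=
  stmt_7_general m n η ϑ βh γh hβ0 hβint hγ0 hγint C hC D hD
end

section
/- For every k = 1, …, m one has ∑_{i=1}^{m+1} H_i η_k/(β̂_i − η_k) + 1 + ∑_{j=1}^{n+1} N_j η_k/(η_k + γ̂_j) = 0. -/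
/-!
Consider `F(x) = c ∏ₗ (ηₗ - x) ∏ₗ (x + ϑₗ)` and `Q(x) = x ∏ᵢ (β̂ᵢ - x) ∏ⱼ (x + γ̂ⱼ)` with
`c = ∏ β̂ ∏ γ̂ / (∏ η ∏ ϑ)`. By interlacing and positivity, `Q` has the `m + n + 3` simple roots
`0, β̂ᵢ, -γ̂ⱼ`, and `deg F = m + n`, so `F/Q = ∑ₐ F(a) / (Q'(a) (x - a))` (Lagrange interpolation of
`F` at the roots of `Q`). The residues `F(a)/Q'(a)` are `1` at `0`, `-Hᵢ` at `β̂ᵢ` and `Nⱼ` at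
`-γ̂ⱼ`. Evaluating at the root `x = η_k` of `F` and multiplying by `η_k` gives the identity.
-/

open Polynomial Finset Lagrange

namespace Polynomial

theorem natDegree_prod_le_card {R ι : Type*} [CommSemiring R] (s : Finset ι) (f : ι → R[X])
    (h : ∀ i ∈ s, (f i).natDegree ≤ 1) : (∏ i ∈ s, f i).natDegree ≤ #s :=
  (natDegree_prod_le s f).trans (by simpa using Finset.sum_le_card_nsmul s _ 1 h)

theorem eq_C_leadingCoeff_mul_nodal {R : Type*} [CommRing R] [IsDomain R] {Q : R[X]}
    {s : Finset R} (hQ : Q ≠ 0) (hroots : ∀ a ∈ s, Q.IsRoot a) (hdeg : Q.natDegree ≤ #s) :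
    Q = C Q.leadingCoeff * nodal s id := by
  refine eq_leadingCoeff_mul_of_monic_of_dvd_of_natDegree_le nodal_monic ?_
    (by rwa [natDegree_nodal])
  have hle : s.val ≤ Q.roots :=
    (Multiset.le_iff_subset s.nodup).mpr fun a ha => (mem_roots hQ).mpr (hroots a ha)
  simpa [nodal] using (Multiset.prod_X_sub_C_dvd_iff_le_roots hQ s.val).mpr hle

theorem eval_derivative_prod_of_eval_eq_zero {R ι : Type*} [CommRing R] [DecidableEq ι]
    {s : Finset ι} {f : ι → R[X]} {i : ι} (hi : i ∈ s) {x : R} (hx : (f i).eval x = 0) :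
    (derivative (∏ j ∈ s, f j)).eval x =
      (derivative (f i)).eval x * ∏ j ∈ s.erase i, (f j).eval x := by
  rw [← mul_prod_erase s f hi, derivative_mul, eval_add, eval_mul, eval_mul, hx, zero_mul,
    add_zero, eval_prod]

theorem eval_div_eq_sum_div_derivative {K : Type*} [Field K] {s : Finset K} {F Q : K[X]}
    (hroots : ∀ a ∈ s, Q.IsRoot a) (hQ : Q.natDegree ≤ #s) (hF : F.degree < #s) {x : K}
    (hx : Q.eval x ≠ 0) :
    F.eval x / Q.eval x = ∑ a ∈ s, F.eval a / ((derivative Q).eval a * (x - a)) := by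
  classical
  have hQ0 : Q ≠ 0 := by rintro rfl; simp at hx
  have hQ_eq := eq_C_leadingCoeff_mul_nodal hQ0 hroots hQ
  have hxs : ∀ a ∈ s, x ≠ id a := fun a ha hxa => hx (hxa ▸ hroots a ha)
  conv_lhs =>
    rw [eq_interpolate (v := id) (Set.injOn_id _) hF, eval_interpolate_not_at_node _ hxs]
  rw [hQ_eq, eval_mul, eval_C, mul_comm, mul_div_mul_comm, div_self (eval_nodal_not_at_node hxs),
    mul_one, sum_div]
  refine sum_congr rfl fun a ha => ?_
  rw [derivative_mul, derivative_C, zero_mul, zero_add, eval_mul, eval_C,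
    nodalWeight_eq_eval_derivative_nodal ha]
  simp only [id]
  field_simp

end Polynomial

namespace Interlacing

open Function

theorem strictMono_of_interlace {α : Type*} [Preorder α] {N : ℕ} {b : Fin (N + 1) → α}
    {e : Fin N → α} (h : ∀ k, b k.castSucc < e k ∧ e k < b k.succ) : StrictMono b :=
  Fin.strictMono_iff_lt_succ.mpr fun k => (h k).1.trans (h k).2

theorem ne_of_interlace {α : Type*} [LinearOrder α] {N : ℕ} {b : Fin (N + 1) → α}
    {e : Fin N → α} (h : ∀ k, b k.castSucc < e k ∧ e k < b k.succ) (i : Fin (N + 1))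
    (k : Fin N) : b i ≠ e k := by
  have hb := strictMono_of_interlace h
  rcases le_or_gt i k.castSucc with hi | hi
  · exact ((hb.monotone hi).trans_lt (h k).1).ne
  · exact ((h k).2.trans_le (hb.monotone (Fin.castSucc_lt_iff_succ_le.mp hi))).ne'

variable {m n : ℕ} (η : Fin m → ℝ) (ϑ : Fin n → ℝ) (βh : Fin (m + 1) → ℝ) (γh : Fin (n + 1) → ℝ)

noncomputable def nodes : Finset ℝ :=
  insert 0 (univ.image βh ∪ univ.image (-γh))

noncomputable def denom : ℝ[X] :=
  X * (∏ i, (C (βh i) - X)) * ∏ j, (X + C (γh j))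

noncomputable def numer : ℝ[X] :=
  C ((∏ i, βh i) * (∏ j, γh j) / ((∏ l, η l) * (∏ l, ϑ l))) *
    (∏ l, (C (η l) - X)) * ∏ l, (X + C (ϑ l))

noncomputable def coeffH (i : Fin (m + 1)) : ℝ :=
  ((∏ k, (η k - βh i)) * (∏ k ∈ Finset.univ.erase i, βh k) *
      (∏ k, (βh i + ϑ k)) * (∏ k, γh k)) /
    ((∏ k, η k) * (∏ k ∈ Finset.univ.erase i, (βh k - βh i)) *
      (∏ k, ϑ k) * (∏ k, (βh i + γh k)))

noncomputable def coeffN (j : Fin (n + 1)) : ℝ :=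
  -(((∏ k, (ϑ k - γh j)) * (∏ k ∈ Finset.univ.erase j, γh k) *
      (∏ k, (γh j + η k)) * (∏ k, βh k)) /
    ((∏ k, ϑ k) * (∏ k ∈ Finset.univ.erase j, (γh k - γh j)) *
      (∏ k, η k) * (∏ k, (γh j + βh k))))

variable {βh γh}

theorem sum_nodes (hβ : Injective βh) (hγ : Injective γh) (hβpos : ∀ i, 0 < βh i)
    (hγpos : ∀ j, 0 < γh j) {M : Type*} [AddCommMonoid M] (f : ℝ → M) :
    ∑ a ∈ nodes βh γh, f a = f 0 + (∑ i, f (βh i) + ∑ j, f (-γh j)) := by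
  have hdisj : Disjoint (univ.image βh) (univ.image (-γh)) := by
    simp only [disjoint_left, mem_image, mem_univ, true_and, Pi.neg_apply]
    rintro _ ⟨i, rfl⟩ ⟨j, hj⟩
    linarith [hβpos i, hγpos j]
  have h0 : (0 : ℝ) ∉ univ.image βh ∪ univ.image (-γh) := by
    simp only [mem_union, mem_image, mem_univ, true_and, Pi.neg_apply, not_or, not_exists]
    exact ⟨fun i => (hβpos i).ne', fun j => by linarith [hγpos j]⟩
  rw [nodes, sum_insert h0, sum_union hdisj, sum_image hβ.injOn,
    sum_image (show Injective (-γh) from fun _ _ h => hγ (neg_injective h)).injOn]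
  rfl

theorem card_nodes (hβ : Injective βh) (hγ : Injective γh) (hβpos : ∀ i, 0 < βh i)
    (hγpos : ∀ j, 0 < γh j) : #(nodes βh γh) = m + n + 3 := by
  rw [card_eq_sum_ones, sum_nodes hβ hγ hβpos hγpos]
  simp only [sum_const, card_univ, Fintype.card_fin, smul_eq_mul, mul_one]
  ring

theorem isRoot_denom : ∀ a ∈ nodes βh γh, (denom βh γh).IsRoot a := by
  simp only [nodes, mem_insert, mem_union, mem_image, mem_univ, true_and, Pi.neg_apply]
  rintro a (rfl | ⟨i, rfl⟩ | ⟨j, rfl⟩) <;>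
    simp only [IsRoot, denom, eval_mul, eval_X, eval_prod, eval_sub, eval_add, eval_C]
  · simp
  · simp [prod_eq_zero_iff, sub_eq_zero]
  · simp [prod_eq_zero_iff, neg_add_eq_zero]

theorem natDegree_denom_le : (denom βh γh).natDegree ≤ m + n + 3 := by
  have hβ := natDegree_prod_le_card univ (fun i => C (βh i) - X)
    fun i _ => (natDegree_sub_le _ _).trans (by simp)
  have hγ := natDegree_prod_le_card univ (fun j => X + C (γh j))
    fun j _ => (natDegree_add_le _ _).trans (by simp)
  simp only [card_univ, Fintype.card_fin] at hβ hγ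
  refine natDegree_mul_le.trans ?_
  have := natDegree_mul_le.trans (add_le_add natDegree_X_le hβ)
  omega

theorem degree_numer_lt : (numer η ϑ βh γh).degree < ↑(m + n + 3) := by
  have hη := natDegree_prod_le_card univ (fun l => C (η l) - X)
    fun l _ => (natDegree_sub_le _ _).trans (by simp)
  have hϑ := natDegree_prod_le_card univ (fun l => X + C (ϑ l))
    fun l _ => (natDegree_add_le _ _).trans (by simp)
  simp only [card_univ, Fintype.card_fin] at hη hϑ
  have hdeg : (numer η ϑ βh γh).natDegree ≤ m + n := by
    rw [numer, mul_assoc]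
    exact (natDegree_C_mul_le _ _).trans (natDegree_mul_le.trans (add_le_add hη hϑ))
  exact degree_le_natDegree.trans_lt (by exact_mod_cast hdeg.trans_lt (by omega))

theorem eval_numer_eq_zero (k : Fin m) : (numer η ϑ βh γh).eval (η k) = 0 := by
  simp [numer, eval_prod, prod_eq_zero_iff, sub_eq_zero]

theorem eval_denom_ne_zero (hγpos : ∀ j, 0 < γh j) {x : ℝ} (hx : 0 < x)
    (hxβ : ∀ i, βh i ≠ x) : (denom βh γh).eval x ≠ 0 := by
  simp only [denom, eval_mul, eval_X, eval_prod, eval_sub, eval_add, eval_C]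
  exact mul_ne_zero
    (mul_ne_zero hx.ne' (prod_ne_zero_iff.mpr fun i _ => sub_ne_zero.mpr (hxβ i)))
    (prod_ne_zero_iff.mpr fun j _ => (add_pos hx (hγpos j)).ne')

theorem eval_derivative_denom_zero :
    (derivative (denom βh γh)).eval 0 = (∏ i, βh i) * ∏ j, γh j := by
  simp [denom, derivative_mul, eval_prod]

theorem eval_derivative_denom_βh (i : Fin (m + 1)) :
    (derivative (denom βh γh)).eval (βh i) =
      βh i * -(∏ k ∈ univ.erase i, (βh k - βh i)) * ∏ j, (βh i + γh j) := by
  have hB : (∏ k, (C (βh k) - X)).eval (βh i) = 0 := by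
    simp [eval_prod, prod_eq_zero_iff, sub_eq_zero]
  have hB' : (derivative (∏ k, (C (βh k) - X))).eval (βh i) =
      -∏ k ∈ univ.erase i, (βh k - βh i) := by
    rw [eval_derivative_prod_of_eval_eq_zero (mem_univ i) (by simp)]
    simp
  simp only [denom, derivative_mul, eval_add, eval_mul, derivative_X, eval_one, eval_X, hB, hB',
    eval_prod, eval_add, eval_C]
  ring

theorem eval_derivative_denom_neg_γh (j : Fin (n + 1)) :
    (derivative (denom βh γh)).eval (-γh j) =
      -γh j * (∏ i, (βh i + γh j)) * ∏ k ∈ univ.erase j, (γh k - γh j) := by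
  have hG : (∏ k, (X + C (γh k))).eval (-γh j) = 0 := by
    simp [eval_prod, prod_eq_zero_iff, neg_add_eq_zero]
  have hG' : (derivative (∏ k, (X + C (γh k)))).eval (-γh j) =
      ∏ k ∈ univ.erase j, (γh k - γh j) := by
    rw [eval_derivative_prod_of_eval_eq_zero (mem_univ j) (by simp)]
    simp [neg_add_eq_sub]
  simp only [denom, derivative_mul (f := X * _), eval_add, eval_mul, hG, hG', eval_X, eval_prod,
    eval_sub, eval_C, sub_neg_eq_add, mul_zero, zero_add]

variable {η ϑ}

theorem eval_numer_div_eval_derivative_denom_zero (hη : ∀ l, η l ≠ 0) (hϑ : ∀ l, ϑ l ≠ 0)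
    (hβpos : ∀ i, 0 < βh i) (hγpos : ∀ j, 0 < γh j) :
    (numer η ϑ βh γh).eval 0 / (derivative (denom βh γh)).eval 0 = 1 := by
  have : ∏ l, η l ≠ 0 := prod_ne_zero_iff.mpr fun l _ => hη l
  have : ∏ l, ϑ l ≠ 0 := prod_ne_zero_iff.mpr fun l _ => hϑ l
  have : ∏ i, βh i ≠ 0 := prod_ne_zero_iff.mpr fun i _ => (hβpos i).ne'
  have : ∏ j, γh j ≠ 0 := prod_ne_zero_iff.mpr fun j _ => (hγpos j).ne'
  rw [eval_derivative_denom_zero]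
  simp only [numer, eval_mul, eval_C, eval_prod, eval_sub, eval_add, eval_X, sub_zero, zero_add]
  field_simp

theorem eval_numer_div_eval_derivative_denom_βh (hη : ∀ l, η l ≠ 0) (hϑ : ∀ l, ϑ l ≠ 0)
    (hβ : Injective βh) (hβpos : ∀ i, 0 < βh i) (hγpos : ∀ j, 0 < γh j) (i : Fin (m + 1)) :
    (numer η ϑ βh γh).eval (βh i) / (derivative (denom βh γh)).eval (βh i) =
      -coeffH η ϑ βh γh i := by
  have : ∏ l, η l ≠ 0 := prod_ne_zero_iff.mpr fun l _ => hη l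
  have : ∏ l, ϑ l ≠ 0 := prod_ne_zero_iff.mpr fun l _ => hϑ l
  have : ∏ k ∈ univ.erase i, (βh k - βh i) ≠ 0 := prod_ne_zero_iff.mpr fun k hk =>
    sub_ne_zero.mpr fun h => (mem_erase.mp hk).1 (hβ h)
  have : ∏ j, (βh i + γh j) ≠ 0 :=
    prod_ne_zero_iff.mpr fun j _ => (add_pos (hβpos i) (hγpos j)).ne'
  have := (hβpos i).ne'
  simp only [eval_derivative_denom_βh, coeffH, numer, eval_mul, eval_C, eval_prod, eval_sub,
    eval_add, eval_X]
  rw [← mul_prod_erase univ βh (mem_univ i)]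
  field_simp

theorem eval_numer_div_eval_derivative_denom_neg_γh (hη : ∀ l, η l ≠ 0) (hϑ : ∀ l, ϑ l ≠ 0)
    (hγ : Injective γh) (hβpos : ∀ i, 0 < βh i) (hγpos : ∀ j, 0 < γh j) (j : Fin (n + 1)) :
    (numer η ϑ βh γh).eval (-γh j) / (derivative (denom βh γh)).eval (-γh j) =
      coeffN η ϑ βh γh j := by
  have : ∏ l, η l ≠ 0 := prod_ne_zero_iff.mpr fun l _ => hη l
  have : ∏ l, ϑ l ≠ 0 := prod_ne_zero_iff.mpr fun l _ => hϑ l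
  have : ∏ k ∈ univ.erase j, (γh k - γh j) ≠ 0 := prod_ne_zero_iff.mpr fun k hk =>
    sub_ne_zero.mpr fun h => (mem_erase.mp hk).1 (hγ h)
  have : ∏ i, (γh j + βh i) ≠ 0 :=
    prod_ne_zero_iff.mpr fun i _ => (add_pos (hγpos j) (hβpos i)).ne'
  have := (hγpos j).ne'
  simp only [eval_derivative_denom_neg_γh, coeffN, numer, eval_mul, eval_C, eval_prod, eval_sub,
    eval_add, eval_X, sub_neg_eq_add, neg_add_eq_sub, add_comm (βh _) (γh j),
    add_comm (η _) (γh j)]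
  rw [← mul_prod_erase univ γh (mem_univ j)]
  field_simp

end Interlacing

open Interlacing

theorem stmt_8_general (m n : ℕ)
    (η : Fin m → ℝ) (ϑ : Fin n → ℝ)
    (βh : Fin (m + 1) → ℝ) (γh : Fin (n + 1) → ℝ)
    (hβ0 : 0 < βh 0)
    (hβint : ∀ k : Fin m, βh k.castSucc < η k ∧ η k < βh k.succ)
    (hγ0 : 0 < γh 0)
    (hγint : ∀ k : Fin n, γh k.castSucc < ϑ k ∧ ϑ k < γh k.succ)
    (H : Fin (m + 1) → ℝ)
    (hH : ∀ i, H i =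
      ((∏ k, (η k - βh i)) * (∏ k ∈ Finset.univ.erase i, βh k) *
          (∏ k, (βh i + ϑ k)) * (∏ k, γh k)) /
        ((∏ k, η k) * (∏ k ∈ Finset.univ.erase i, (βh k - βh i)) *
          (∏ k, ϑ k) * (∏ k, (βh i + γh k))))
    (N : Fin (n + 1) → ℝ)
    (hN : ∀ j, N j =
      -(((∏ k, (ϑ k - γh j)) * (∏ k ∈ Finset.univ.erase j, γh k) *
          (∏ k, (γh j + η k)) * (∏ k, βh k)) /
        ((∏ k, ϑ k) * (∏ k ∈ Finset.univ.erase j, (γh k - γh j)) *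
          (∏ k, η k) * (∏ k, (γh j + βh k))))) :
    ∀ k : Fin m,
      (∑ i, H i * η k / (βh i - η k)) + 1 + (∑ j, N j * η k / (η k + γh j)) = 0 := by
  intro k
  have hβ := strictMono_of_interlace hβint
  have hγ := strictMono_of_interlace hγint
  have hβpos i : 0 < βh i := hβ0.trans_le (hβ.monotone (Fin.zero_le i))
  have hγpos j : 0 < γh j := hγ0.trans_le (hγ.monotone (Fin.zero_le j))
  have hη l : η l ≠ 0 := ((hβpos _).trans (hβint l).1).ne'
  have hϑ l : ϑ l ≠ 0 := ((hγpos _).trans (hγint l).1).ne'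
  have hcard := card_nodes hβ.injective hγ.injective hβpos hγpos
  have hpf := eval_div_eq_sum_div_derivative (F := numer η ϑ βh γh) isRoot_denom
    (hcard ▸ natDegree_denom_le) (hcard ▸ degree_numer_lt η ϑ)
    (eval_denom_ne_zero hγpos ((hβpos _).trans (hβint k).1) fun i => ne_of_interlace hβint i k)
  have hHc : coeffH η ϑ βh γh = H := funext fun i => (hH i).symm
  have hNc : coeffN η ϑ βh γh = N := funext fun j => (hN j).symm
  simp only [eval_numer_eq_zero, zero_div, sum_nodes hβ.injective hγ.injective hβpos hγpos,
    div_mul_eq_div_div, eval_numer_div_eval_derivative_denom_zero hη hϑ hβpos hγpos,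
    eval_numer_div_eval_derivative_denom_βh hη hϑ hβ.injective hβpos hγpos,
    eval_numer_div_eval_derivative_denom_neg_γh hη hϑ hγ.injective hβpos hγpos, hHc, hNc] at hpf
  have hHterm i : η k * (-H i / (η k - βh i)) = H i * η k / (βh i - η k) := by
    rw [neg_div, ← div_neg, neg_sub]; ring
  have hNterm j : η k * (N j / (η k - -γh j)) = N j * η k / (η k + γh j) := by
    rw [sub_neg_eq_add]; ring
  calc _ = η k * (1 / (η k - 0) + (∑ i, -H i / (η k - βh i) + ∑ j, N j / (η k - -γh j))) := by
        rw [mul_add, mul_add, mul_sum, mul_sum, sub_zero, mul_one_div_cancel (hη k)]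
        simp only [hHterm, hNterm]
        ring
    _ = 0 := by rw [← hpf, mul_zero]

/-- Identity (B.37): with the coefficients `H_i`, `N_j` of (3.5), for every `k = 1, …, m`,
`∑_i H_i η_k/(β̂_i − η_k) + 1 + ∑_j N_j η_k/(η_k + γ̂_j) = 0`. -/
theorem stmt_8 (m n : ℕ) (hm : 1 ≤ m) (hn : 1 ≤ n)
    (η : Fin m → ℝ) (ϑ : Fin n → ℝ)
    (βh : Fin (m + 1) → ℝ) (γh : Fin (n + 1) → ℝ)
    (hβ0 : 0 < βh 0)
    (hβint : ∀ k : Fin m, βh k.castSucc < η k ∧ η k < βh k.succ)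
    (hγ0 : 0 < γh 0)
    (hγint : ∀ k : Fin n, γh k.castSucc < ϑ k ∧ ϑ k < γh k.succ)
    (H : Fin (m + 1) → ℝ)
    (hH : ∀ i, H i =
      ((∏ k, (η k - βh i)) * (∏ k ∈ Finset.univ.erase i, βh k) *
          (∏ k, (βh i + ϑ k)) * (∏ k, γh k)) /
        ((∏ k, η k) * (∏ k ∈ Finset.univ.erase i, (βh k - βh i)) *
          (∏ k, ϑ k) * (∏ k, (βh i + γh k))))
    (N : Fin (n + 1) → ℝ)
    (hN : ∀ j, N j =
      -(((∏ k, (ϑ k - γh j)) * (∏ k ∈ Finset.univ.erase j, γh k) *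
          (∏ k, (γh j + η k)) * (∏ k, βh k)) /
        ((∏ k, ϑ k) * (∏ k ∈ Finset.univ.erase j, (γh k - γh j)) *
          (∏ k, η k) * (∏ k, (γh j + βh k))))) :
    ∀ k : Fin m,
      (∑ i, H i * η k / (βh i - η k)) + 1 + (∑ j, N j * η k / (η k + γh j)) = 0 :=
  stmt_8_general m n η ϑ βh γh hβ0 hβint hγ0 hγint H hH N hN
end

section
/- One has ∑_{i=1}^{m+1} H_i = 1 + ∑_{j=1}^{n+1} N_j, and ∑_{i=1}^{m+1} H_i β̂_i + ∑_{j=1}^{n+1} N_j γ̂_j = 0. -/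
/-!
Both identities are residue theorems for the rational functions `R(x)` and `x R(x)`, where
`R(x) = P(x) / (x ∏ᵢ (x - β̂ᵢ) ∏ⱼ (x + γ̂ⱼ))` and `P(x) = ∏ₖ (ηₖ - x) ∏ₖ (x + ϑₖ)`.
Their numerators have degree at least two less than their denominators, so their residues at
the simple poles `0, β̂ᵢ, -γ̂ⱼ` sum to zero: the top divided difference of a polynomial of lower
degree vanishes. If `r ≠ 0` is the residue of `R` at `0`, the residue of `R` at `β̂ᵢ` is `-r Hᵢ`
and at `-γ̂ⱼ` it is `r Nⱼ`, while `x R(x)` has no pole at `0`.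
-/

open Finset Polynomial

theorem Lagrange.sum_eval_div_prod_erase_sub_eq_zero {F ι : Type*} [Field F] [DecidableEq ι]
    {s : Finset ι} {v : ι → F} (hvs : Set.InjOn v s) {P : F[X]} (hP : P.natDegree + 1 < #s) :
    ∑ i ∈ s, P.eval (v i) / ∏ j ∈ s.erase i, (v i - v j) = 0 := by
  rw [← Lagrange.coeff_eq_sum hvs ((degree_lt_iff_coeff_zero _ _).mpr fun k hk =>
    coeff_eq_zero_of_natDegree_lt (by omega)), coeff_eq_zero_of_natDegree_lt (by omega)]

theorem Finset.prod_sub_swap {R ι : Type*} [CommRing R] (s : Finset ι) (a : R) (f : ι → R) :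
    ∏ k ∈ s, (a - f k) = (-1) ^ #s * ∏ k ∈ s, (f k - a) := by
  rw [← prod_neg]
  simp

namespace Fintype

variable {α β M : Type*} [Fintype α] [Fintype β] [DecidableEq α] [CommMonoid M]

theorem prod_erase_eq_prod_update (f : α → M) (a : α) :
    ∏ x ∈ univ.erase a, f x = ∏ x, Function.update f a 1 x := by
  rw [prod_update_of_mem (mem_univ a), one_mul, sdiff_singleton_eq_erase]

theorem prod_erase_none (f : Option α → M) : ∏ x ∈ univ.erase none, f x = ∏ a, f (some a) := by
  simp [prod_erase_eq_prod_update]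

theorem prod_erase_some (f : Option α → M) (a : α) :
    ∏ x ∈ univ.erase (some a), f x = f none * ∏ b ∈ univ.erase a, f (some b) := by
  simp [prod_erase_eq_prod_update, Function.update_apply]

variable [DecidableEq β]

theorem prod_erase_inl (f : α ⊕ β → M) (a : α) :
    ∏ x ∈ univ.erase (.inl a), f x = (∏ b ∈ univ.erase a, f (.inl b)) * ∏ b, f (.inr b) := by
  simp [prod_erase_eq_prod_update, Function.update_apply, prod_sum_type]

theorem prod_erase_inr (f : α ⊕ β → M) (b : β) :
    ∏ x ∈ univ.erase (.inr b), f x = (∏ a, f (.inl a)) * ∏ c ∈ univ.erase b, f (.inr c) := by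
  simp [prod_erase_eq_prod_update, Function.update_apply, prod_sum_type]

end Fintype

section Interlace

variable {α : Type*} [Preorder α] {m : ℕ} {x : Fin (m + 1) → α} {y : Fin m → α}

theorem Fin.strictMono_of_interlace (h : ∀ k : Fin m, x k.castSucc < y k ∧ y k < x k.succ) :
    StrictMono x :=
  Fin.strictMono_iff_lt_succ.mpr fun k => (h k).1.trans (h k).2

theorem Fin.forall_lt_of_interlace {a : α} (ha : a < x 0)
    (h : ∀ k : Fin m, x k.castSucc < y k ∧ y k < x k.succ) : (∀ i, a < x i) ∧ ∀ k, a < y k := by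
  have hx : ∀ i, a < x i := fun i =>
    ha.trans_le ((Fin.strictMono_of_interlace h).monotone (Fin.zero_le i))
  exact ⟨hx, fun k => (hx _).trans (h k).1⟩

end Interlace

section Residues

variable {F ι κ σ τ : Type*} [Field F]

def poles (b : ι → F) (c : κ → F) : Option (ι ⊕ κ) → F
  | none => 0
  | some (.inl i) => b i
  | some (.inr j) => -c j

theorem poles_injective {b : ι → F} {c : κ → F} (hb : Function.Injective b)
    (hc : Function.Injective c) (hb0 : ∀ i, b i ≠ 0) (hc0 : ∀ j, c j ≠ 0)
    (hbc : ∀ i j, b i + c j ≠ 0) : Function.Injective (poles b c) := by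
  rintro (_ | i | j) (_ | i' | j') h <;> simp only [poles] at h
  · rfl
  · exact absurd h.symm (hb0 i')
  · exact absurd (neg_eq_zero.mp h.symm) (hc0 j')
  · exact absurd h (hb0 i)
  · rw [hb h]
  · exact absurd (eq_neg_iff_add_eq_zero.mp h) (hbc i j')
  · exact absurd (neg_eq_zero.mp h) (hc0 j)
  · exact absurd (eq_neg_iff_add_eq_zero.mp h.symm) (hbc i' j)
  · rw [hc (neg_injective h)]

variable [Fintype ι] [Fintype κ] [Fintype σ] [Fintype τ]

theorem sum_residues_poles_eq_zero [DecidableEq ι] [DecidableEq κ] {b : ι → F} {c : κ → F}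
    (hbc : Function.Injective (poles b c)) {P : F[X]}
    (hP : P.natDegree < Fintype.card ι + Fintype.card κ) :
    P.eval 0 / ((∏ i, -b i) * ∏ j, c j) +
      (∑ i, P.eval (b i) / (b i * ((∏ k ∈ univ.erase i, (b i - b k)) * ∏ j, (b i + c j))) +
        ∑ j, P.eval (-c j) / -(c j * ((∏ i, (-c j - b i)) * ∏ k ∈ univ.erase j, (-c j + c k))))
      = 0 := by
  have h := Lagrange.sum_eval_div_prod_erase_sub_eq_zero (s := univ) hbc.injOn (P := P)
    (by simp only [card_univ, Fintype.card_option, Fintype.card_sum]; omega)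
  simpa [Fintype.sum_sum_type, Fintype.prod_sum_type, Fintype.prod_erase_none,
    Fintype.prod_erase_some, Fintype.prod_erase_inl, Fintype.prod_erase_inr, poles] using h

noncomputable def numeratorPoly (η : σ → F) (ϑ : τ → F) : F[X] :=
  (∏ k, (C (η k) - X)) * ∏ k, (X + C (ϑ k))

theorem eval_numeratorPoly (η : σ → F) (ϑ : τ → F) (x : F) :
    (numeratorPoly η ϑ).eval x = (∏ k, (η k - x)) * ∏ k, (x + ϑ k) := by
  simp [numeratorPoly, eval_prod]

theorem natDegree_numeratorPoly_le (η : σ → F) (ϑ : τ → F) :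
    (numeratorPoly η ϑ).natDegree ≤ Fintype.card σ + Fintype.card τ := by
  refine natDegree_mul_le.trans (add_le_add ?_ ?_) <;>
    refine (natDegree_prod_le _ _).trans ((sum_le_card_nsmul _ _ 1 fun k _ => ?_).trans (by simp))
  · exact (natDegree_sub_le _ _).trans (by simp)
  · exact (natDegree_add_le _ _).trans (by simp)

/-- `Hᵢ` of (3.5); exchanging the roles of `(η, β̂)` and `(ϑ, γ̂)` turns it into `-Nⱼ`. -/
def coeffH [DecidableEq ι] (η : σ → F) (ϑ : τ → F) (b : ι → F) (c : κ → F) (i : ι) : F :=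
  ((∏ k, (η k - b i)) * (∏ k ∈ univ.erase i, b k) * (∏ k, (b i + ϑ k)) * (∏ k, c k)) /
    ((∏ k, η k) * (∏ k ∈ univ.erase i, (b k - b i)) * (∏ k, ϑ k) * (∏ k, (b i + c k)))

variable {η : σ → F} {ϑ : τ → F} {b : ι → F} {c : κ → F}

theorem residue_poles_inl_eq [DecidableEq ι] (hη : ∀ k, η k ≠ 0) (hϑ : ∀ k, ϑ k ≠ 0)
    (hb : Function.Injective b) (hb0 : ∀ i, b i ≠ 0) (hc0 : ∀ j, c j ≠ 0)
    (hbc : ∀ i j, b i + c j ≠ 0) (i : ι) :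
    (numeratorPoly η ϑ).eval (b i) /
        (b i * ((∏ k ∈ univ.erase i, (b i - b k)) * ∏ j, (b i + c j))) =
      -((numeratorPoly η ϑ).eval 0 / ((∏ i, -b i) * ∏ j, c j) * coeffH η ϑ b c i) := by
  have hprod : ∏ k ∈ univ.erase i, (b k - b i) ≠ 0 :=
    prod_ne_zero_iff.mpr fun k hk => sub_ne_zero.mpr (hb.ne (ne_of_mem_erase hk))
  have : ∏ k, η k ≠ 0 := prod_ne_zero_iff.mpr fun k _ => hη k
  have : ∏ k, ϑ k ≠ 0 := prod_ne_zero_iff.mpr fun k _ => hϑ k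
  have : ∏ k, c k ≠ 0 := prod_ne_zero_iff.mpr fun k _ => hc0 k
  have : ∏ k ∈ univ.erase i, b k ≠ 0 := prod_ne_zero_iff.mpr fun k _ => hb0 k
  have : ∏ k, (b i + c k) ≠ 0 := prod_ne_zero_iff.mpr fun k _ => hbc i k
  rw [eval_numeratorPoly, eval_numeratorPoly, coeffH, prod_neg, prod_sub_swap (univ.erase i),
    ← mul_prod_erase univ b (mem_univ i), ← card_erase_add_one (mem_univ i), pow_succ]
  simp only [sub_zero, zero_add]
  field_simp

theorem residue_poles_inr_eq [DecidableEq κ] (hη : ∀ k, η k ≠ 0) (hϑ : ∀ k, ϑ k ≠ 0)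
    (hc : Function.Injective c) (hb0 : ∀ i, b i ≠ 0) (hc0 : ∀ j, c j ≠ 0)
    (hbc : ∀ i j, b i + c j ≠ 0) (j : κ) :
    (numeratorPoly η ϑ).eval (-c j) /
        -(c j * ((∏ i, (-c j - b i)) * ∏ k ∈ univ.erase j, (-c j + c k))) =
      (numeratorPoly η ϑ).eval 0 / ((∏ i, -b i) * ∏ j, c j) * -coeffH ϑ η c b j := by
  have hprod : ∏ k ∈ univ.erase j, (c k - c j) ≠ 0 :=
    prod_ne_zero_iff.mpr fun k hk => sub_ne_zero.mpr (hc.ne (ne_of_mem_erase hk))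
  have : ∏ k, η k ≠ 0 := prod_ne_zero_iff.mpr fun k _ => hη k
  have : ∏ k, ϑ k ≠ 0 := prod_ne_zero_iff.mpr fun k _ => hϑ k
  have : ∏ k, b k ≠ 0 := prod_ne_zero_iff.mpr fun k _ => hb0 k
  have : ∏ k ∈ univ.erase j, c k ≠ 0 := prod_ne_zero_iff.mpr fun k _ => hc0 k
  have : ∏ k, (c j + b k) ≠ 0 := prod_ne_zero_iff.mpr fun k _ => add_comm (b k) (c j) ▸ hbc k j
  have h1 : ∏ i, (-c j - b i) = ∏ i, -(c j + b i) := prod_congr rfl fun _ _ => by ring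
  have h2 : ∏ k ∈ univ.erase j, (-c j + c k) = ∏ k ∈ univ.erase j, (c k - c j) :=
    prod_congr rfl fun _ _ => by ring
  have h3 : ∏ k, (η k - -c j) = ∏ k, (c j + η k) := prod_congr rfl fun _ _ => by ring
  have h4 : ∏ k, (-c j + ϑ k) = ∏ k, (ϑ k - c j) := prod_congr rfl fun _ _ => by ring
  rw [eval_numeratorPoly, eval_numeratorPoly, coeffH, h1, h2, h3, h4, prod_neg, prod_neg,
    ← mul_prod_erase univ c (mem_univ j)]
  simp only [sub_zero, zero_add]
  field_simp

theorem eval_zero_numeratorPoly_div_ne_zero (hη : ∀ k, η k ≠ 0) (hϑ : ∀ k, ϑ k ≠ 0)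
    (hb0 : ∀ i, b i ≠ 0) (hc0 : ∀ j, c j ≠ 0) :
    (numeratorPoly η ϑ).eval 0 / ((∏ i, -b i) * ∏ j, c j) ≠ 0 := by
  simp [eval_numeratorPoly, prod_ne_zero_iff, hη, hϑ, hb0, hc0]

variable [DecidableEq ι] [DecidableEq κ]

theorem sum_coeffH_eq_one_add_sum (hη : ∀ k, η k ≠ 0) (hϑ : ∀ k, ϑ k ≠ 0)
    (hb : Function.Injective b) (hc : Function.Injective c) (hb0 : ∀ i, b i ≠ 0)
    (hc0 : ∀ j, c j ≠ 0) (hbc : ∀ i j, b i + c j ≠ 0)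
    (hcard : Fintype.card σ + Fintype.card τ < Fintype.card ι + Fintype.card κ) :
    ∑ i, coeffH η ϑ b c i = 1 + ∑ j, -coeffH ϑ η c b j := by
  have E := sum_residues_poles_eq_zero (poles_injective hb hc hb0 hc0 hbc)
    ((natDegree_numeratorPoly_le η ϑ).trans_lt hcard)
  simp only [residue_poles_inl_eq hη hϑ hb hb0 hc0 hbc,
    residue_poles_inr_eq hη hϑ hc hb0 hc0 hbc] at E
  set r := (numeratorPoly η ϑ).eval 0 / ((∏ i, -b i) * ∏ j, c j)
  have h : r * (1 + (∑ i, -coeffH η ϑ b c i + ∑ j, -coeffH ϑ η c b j)) = 0 := by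
    rw [← E, mul_add, mul_one, mul_add, mul_sum, mul_sum]
    congr 2
    exact sum_congr rfl fun _ _ => by ring
  rw [sum_neg_distrib] at h
  linear_combination -(mul_eq_zero.mp h).resolve_left
    (eval_zero_numeratorPoly_div_ne_zero hη hϑ hb0 hc0)

theorem sum_coeffH_mul_add_sum_eq_zero (hη : ∀ k, η k ≠ 0) (hϑ : ∀ k, ϑ k ≠ 0)
    (hb : Function.Injective b) (hc : Function.Injective c) (hb0 : ∀ i, b i ≠ 0)
    (hc0 : ∀ j, c j ≠ 0) (hbc : ∀ i j, b i + c j ≠ 0)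
    (hcard : Fintype.card σ + Fintype.card τ + 1 < Fintype.card ι + Fintype.card κ) :
    ∑ i, coeffH η ϑ b c i * b i + ∑ j, -coeffH ϑ η c b j * c j = 0 := by
  have E := sum_residues_poles_eq_zero (poles_injective hb hc hb0 hc0 hbc)
    (P := X * numeratorPoly η ϑ) <| (natDegree_mul_le.trans
      (add_le_add natDegree_X_le (natDegree_numeratorPoly_le η ϑ))).trans_lt (by omega)
  simp only [eval_mul, eval_X, zero_mul, zero_div, mul_div_assoc,
    residue_poles_inl_eq hη hϑ hb hb0 hc0 hbc, residue_poles_inr_eq hη hϑ hc hb0 hc0 hbc] at E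
  set r := (numeratorPoly η ϑ).eval 0 / ((∏ i, -b i) * ∏ j, c j)
  have h : -r * (∑ i, coeffH η ϑ b c i * b i + ∑ j, -coeffH ϑ η c b j * c j) = 0 := by
    rw [← E, zero_add, mul_add, mul_sum, mul_sum]
    congr 1 <;> exact sum_congr rfl fun _ _ => by ring
  exact (mul_eq_zero.mp h).resolve_left
    (neg_ne_zero.mpr (eval_zero_numeratorPoly_div_ne_zero hη hϑ hb0 hc0))

end Residues

theorem stmt_9_general (m n : ℕ)
    (η : Fin m → ℝ) (ϑ : Fin n → ℝ)
    (βh : Fin (m + 1) → ℝ) (γh : Fin (n + 1) → ℝ)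
    (hβ0 : 0 < βh 0)
    (hβint : ∀ k : Fin m, βh k.castSucc < η k ∧ η k < βh k.succ)
    (hγ0 : 0 < γh 0)
    (hγint : ∀ k : Fin n, γh k.castSucc < ϑ k ∧ ϑ k < γh k.succ)
    (H : Fin (m + 1) → ℝ)
    (hH : ∀ i, H i =
      ((∏ k, (η k - βh i)) * (∏ k ∈ Finset.univ.erase i, βh k) *
          (∏ k, (βh i + ϑ k)) * (∏ k, γh k)) /
        ((∏ k, η k) * (∏ k ∈ Finset.univ.erase i, (βh k - βh i)) *
          (∏ k, ϑ k) * (∏ k, (βh i + γh k))))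
    (N : Fin (n + 1) → ℝ)
    (hN : ∀ j, N j =
      -(((∏ k, (ϑ k - γh j)) * (∏ k ∈ Finset.univ.erase j, γh k) *
          (∏ k, (γh j + η k)) * (∏ k, βh k)) /
        ((∏ k, ϑ k) * (∏ k ∈ Finset.univ.erase j, (γh k - γh j)) *
          (∏ k, η k) * (∏ k, (γh j + βh k))))) :
    ((∑ i, H i) = 1 + ∑ j, N j) ∧ ((∑ i, H i * βh i) + (∑ j, N j * γh j) = 0) := by
  obtain ⟨hβ, hη⟩ := Fin.forall_lt_of_interlace hβ0 hβint
  obtain ⟨hγ, hϑ⟩ := Fin.forall_lt_of_interlace hγ0 hγint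
  have hβγ : ∀ i j, βh i + γh j ≠ 0 := fun i j => (add_pos (hβ i) (hγ j)).ne'
  obtain rfl : H = coeffH η ϑ βh γh := funext hH
  obtain rfl : N = fun j => -coeffH ϑ η γh βh j := funext hN
  have hβinj := (Fin.strictMono_of_interlace hβint).injective
  have hγinj := (Fin.strictMono_of_interlace hγint).injective
  have hη0 : ∀ k, η k ≠ 0 := fun k => (hη k).ne'
  have hϑ0 : ∀ k, ϑ k ≠ 0 := fun k => (hϑ k).ne'
  have hβ0' : ∀ i, βh i ≠ 0 := fun i => (hβ i).ne'
  have hγ0' : ∀ j, γh j ≠ 0 := fun j => (hγ j).ne'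
  exact ⟨sum_coeffH_eq_one_add_sum hη0 hϑ0 hβinj hγinj hβ0' hγ0' hβγ
      (by simp only [Fintype.card_fin]; omega),
    sum_coeffH_mul_add_sum_eq_zero hη0 hϑ0 hβinj hγinj hβ0' hγ0' hβγ
      (by simp only [Fintype.card_fin]; omega)⟩

/-- First two identities of (C.3): with the coefficients `H_i`, `N_j` of (3.5),
`∑_i H_i = 1 + ∑_j N_j` and `∑_i H_i β̂_i + ∑_j N_j γ̂_j = 0`. -/
theorem stmt_9 (m n : ℕ) (hm : 1 ≤ m) (hn : 1 ≤ n)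
    (η : Fin m → ℝ) (ϑ : Fin n → ℝ)
    (βh : Fin (m + 1) → ℝ) (γh : Fin (n + 1) → ℝ)
    (hβ0 : 0 < βh 0)
    (hβint : ∀ k : Fin m, βh k.castSucc < η k ∧ η k < βh k.succ)
    (hγ0 : 0 < γh 0)
    (hγint : ∀ k : Fin n, γh k.castSucc < ϑ k ∧ ϑ k < γh k.succ)
    (H : Fin (m + 1) → ℝ)
    (hH : ∀ i, H i =
      ((∏ k, (η k - βh i)) * (∏ k ∈ Finset.univ.erase i, βh k) *
          (∏ k, (βh i + ϑ k)) * (∏ k, γh k)) /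
        ((∏ k, η k) * (∏ k ∈ Finset.univ.erase i, (βh k - βh i)) *
          (∏ k, ϑ k) * (∏ k, (βh i + γh k))))
    (N : Fin (n + 1) → ℝ)
    (hN : ∀ j, N j =
      -(((∏ k, (ϑ k - γh j)) * (∏ k ∈ Finset.univ.erase j, γh k) *
          (∏ k, (γh j + η k)) * (∏ k, βh k)) /
        ((∏ k, ϑ k) * (∏ k ∈ Finset.univ.erase j, (γh k - γh j)) *
          (∏ k, η k) * (∏ k, (γh j + βh k))))) :
    ((∑ i, H i) = 1 + ∑ j, N j) ∧ ((∑ i, H i * βh i) + (∑ j, N j * γh j) = 0) :=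
  stmt_9_general m n η ϑ βh γh hβ0 hβint hγ0 hγint H hH N hN
end

section
/- The following identities hold: (i) ∑_{i=1}^{m+1} Û_i − ∑_{j=1}^{n+1} V̂_j − 1 = 0; (ii) ∑_{i=1}^{m+1} Û_i β_i + ∑_{j=1}^{n+1} V̂_j γ_j = 0; (iii) for every k = 1, …, n, ∑_{i=1}^{m+1} Û_i ϑ_k/(ϑ_k + β_i) − ∑_{j=1}^{n+1} V̂_j ϑ_k/(ϑ_k − γ_j) − 1 = 0; (iv) for every k = 1, …, m, ∑_{i=1}^{m+1} Û_i η_k/(η_k − β_i) − ∑_{j=1}^{n+1} V̂_j η_k/(η_k + γ_j) − 1 = 0. -/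
/-!
Write `x` for the family of nodes `β_1, …, β_{m+1}, -γ_1, …, -γ_{n+1}` and
`p(z) = ∏ (1 - z/η_k) ∏ (1 + z/ϑ_k)`, a polynomial of degree `m + n` with `p(0) = 1` vanishing at
`η_k` and `-ϑ_k`. Then `Û_i` and `-V̂_j` are exactly the coefficients `c_s` of the partial fraction
expansion `p(z) / ∏ (1 - z/x_s) = ∑ c_s / (1 - z/x_s)`, which is Lagrange interpolation of `p` at
the `m + n + 2` nodes. Evaluating at `z = 0` gives (i); evaluating at a zero `z` of `p` gives
`∑ c_s z/(z - x_s) = ∑ c_s = 1`, i.e. (iii) and (iv); and (ii), `∑ c_s x_s = 0`, is (i) for the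
polynomial `z p(z)`, whose degree is still below the number of nodes.
-/

open Finset Polynomial

section PartialFractions

variable {K ι : Type*} [Field K] [Fintype ι] [DecidableEq ι]

/-- The coefficient of `1 / (1 - z / x i)` in the partial fraction expansion of
`p z / ∏ k, (1 - z / x k)`. -/
def partialFractionCoeff (x : ι → K) (p : K[X]) (i : ι) : K :=
  p.eval (x i) / ∏ k ∈ univ.erase i, (1 - x i / x k)

variable {x : ι → K} {p : K[X]} {a : K}

theorem eval_div_prod_one_sub_div_eq_sum (hx : Function.Injective x) (hx0 : ∀ i, x i ≠ 0)
    (hp : p.degree < Fintype.card ι) (ha : ∀ i, a ≠ x i) :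
    p.eval a / ∏ i, (1 - a / x i) = ∑ i, partialFractionCoeff x p i / (1 - a / x i) := by
  -- `1 - b / x k = (b - x k) * -(x k)⁻¹` reduces this to the first barycentric form of the
  -- Lagrange interpolant of `p`, the factors `-(x k)⁻¹` cancelling on both sides.
  have hfac : ∀ b k, 1 - b / x k = (b - x k) * -(x k)⁻¹ := fun b k => by
    field_simp [hx0 k]; ring
  have hsub : ∀ i, a - x i ≠ 0 := fun i => sub_ne_zero.mpr (ha i)
  have hweight : ∀ i, (∏ k ∈ univ.erase i, (1 - x i / x k)) * (1 - a / x i)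
      = (Lagrange.nodalWeight univ x i)⁻¹ * (a - x i) * ∏ k, -(x k)⁻¹ := by
    intro i
    simp only [hfac, prod_mul_distrib, Lagrange.nodalWeight, prod_inv_distrib, inv_inv,
      ← mul_prod_erase univ (fun k => -(x k)⁻¹) (mem_univ i)]
    ring
  have hnw : ∀ i, Lagrange.nodalWeight univ x i ≠ 0 := fun i =>
    Lagrange.nodalWeight_ne_zero hx.injOn (mem_univ i)
  have hbary : p.eval a = (∏ k, (a - x k)) *
      ∑ i, Lagrange.nodalWeight univ x i * (a - x i)⁻¹ * p.eval (x i) := by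
    conv_lhs => rw [Lagrange.eq_interpolate (f := p) (s := univ) hx.injOn (by simpa using hp)]
    rw [Lagrange.eval_interpolate_not_at_node _ fun i _ => ha i, Lagrange.eval_nodal]
  have hnodal : ∏ k, (a - x k) ≠ 0 := prod_ne_zero_iff.mpr fun k _ => hsub k
  simp only [partialFractionCoeff, div_div, hweight]
  rw [hbary]
  simp only [hfac a, prod_mul_distrib]
  rw [mul_div_mul_left _ _ hnodal, sum_div]
  refine sum_congr rfl fun i _ => ?_
  field_simp [hsub i, hnw i]

theorem sum_partialFractionCoeff (hx : Function.Injective x) (hx0 : ∀ i, x i ≠ 0)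
    (hp : p.degree < Fintype.card ι) : ∑ i, partialFractionCoeff x p i = p.eval 0 := by
  simpa using (eval_div_prod_one_sub_div_eq_sum hx hx0 hp fun i => (hx0 i).symm).symm

theorem sum_partialFractionCoeff_mul_self (hx : Function.Injective x) (hx0 : ∀ i, x i ≠ 0)
    (hp : p.natDegree + 1 < Fintype.card ι) : ∑ i, partialFractionCoeff x p i * x i = 0 := by
  have hXp : (X * p).degree < (Fintype.card ι : WithBot ℕ) := by
    refine degree_le_natDegree.trans_lt (WithBot.coe_lt_coe.mpr ?_)
    exact (natDegree_mul_le.trans (by rw [natDegree_X, add_comm])).trans_lt hp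
  have hcoeff : ∀ i, partialFractionCoeff x (X * p) i = partialFractionCoeff x p i * x i := by
    intro i
    simp only [partialFractionCoeff, eval_mul, eval_X]
    ring
  simpa [hcoeff] using sum_partialFractionCoeff hx hx0 hXp

theorem sum_partialFractionCoeff_mul_div_sub_of_eval_eq_zero (hx : Function.Injective x)
    (hx0 : ∀ i, x i ≠ 0) (hp : p.degree < Fintype.card ι) (ha : ∀ i, a ≠ x i)
    (hpa : p.eval a = 0) : ∑ i, partialFractionCoeff x p i * a / (a - x i) = p.eval 0 := by
  have hterm : ∀ i, partialFractionCoeff x p i * a / (a - x i)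
      = partialFractionCoeff x p i - partialFractionCoeff x p i / (1 - a / x i) := by
    intro i
    field_simp [hx0 i, sub_ne_zero.mpr (ha i), sub_ne_zero.mpr (ha i).symm]
    ring
  rw [sum_congr rfl fun i _ => hterm i, sum_sub_distrib, sum_partialFractionCoeff hx hx0 hp,
    ← eval_div_prod_one_sub_div_eq_sum hx hx0 hp ha, hpa, zero_div, sub_zero]

end PartialFractions

section NormalizedNodal

variable {K κ : Type*} [Field K] [Fintype κ]

noncomputable def normalizedNodal (z : κ → K) : K[X] := ∏ k, (1 - C (z k)⁻¹ * X)

variable {z : κ → K}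

@[simp]
theorem eval_normalizedNodal (a : K) : (normalizedNodal z).eval a = ∏ k, (1 - a / z k) := by
  simp [normalizedNodal, eval_prod, div_eq_inv_mul]

theorem natDegree_normalizedNodal_le : (normalizedNodal z).natDegree ≤ Fintype.card κ := by
  have hfactor : ∀ k, (1 - C (z k)⁻¹ * X).natDegree ≤ 1 := fun k => by
    rw [sub_eq_add_neg, ← neg_mul, ← C_neg, add_comm]
    exact natDegree_linear_le
  unfold normalizedNodal
  refine (natDegree_prod_le _ _).trans ?_
  simpa using sum_le_sum fun k (_ : k ∈ univ) => hfactor k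

theorem eval_normalizedNodal_eq_zero (k : κ) (hk : z k ≠ 0) :
    (normalizedNodal z).eval (z k) = 0 := by
  rw [eval_normalizedNodal]
  exact prod_eq_zero (mem_univ k) (by simp [hk])

end NormalizedNodal

section ProdLemmas

variable {K ι κ M : Type*}

theorem Finset.prod_univ_erase_inl [Fintype ι] [Fintype κ] [DecidableEq ι] [DecidableEq κ]
    [CommMonoid M] (f : ι ⊕ κ → M) (i : ι) :
    ∏ s ∈ univ.erase (Sum.inl i), f s = (∏ k ∈ univ.erase i, f (.inl k)) * ∏ j, f (.inr j) := by
  rw [show univ.erase (Sum.inl i) = (univ.erase i).disjSum (univ : Finset κ) by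
    ext (_ | _) <;> simp, prod_disjSum]

theorem Finset.prod_univ_erase_inr [Fintype ι] [Fintype κ] [DecidableEq ι] [DecidableEq κ]
    [CommMonoid M] (f : ι ⊕ κ → M) (j : κ) :
    ∏ s ∈ univ.erase (Sum.inr j), f s = (∏ i, f (.inl i)) * ∏ k ∈ univ.erase j, f (.inr k) := by
  rw [show univ.erase (Sum.inr j) = (univ : Finset ι).disjSum (univ.erase j) by
    ext (_ | _) <;> simp, prod_disjSum]

variable [Field K] (s : Finset ι) (a : K) {b : ι → K}

theorem Finset.prod_one_sub_div (hb : ∀ k ∈ s, b k ≠ 0) :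
    ∏ k ∈ s, (1 - a / b k) = (∏ k ∈ s, (b k - a)) / ∏ k ∈ s, b k := by
  rw [← prod_div_distrib]
  exact prod_congr rfl fun k hk => by field_simp [hb k hk]

theorem Finset.prod_one_add_div (hb : ∀ k ∈ s, b k ≠ 0) :
    ∏ k ∈ s, (1 + a / b k) = (∏ k ∈ s, (a + b k)) / ∏ k ∈ s, b k := by
  rw [← prod_div_distrib]
  exact prod_congr rfl fun k hk => by field_simp [hb k hk]; ring

end ProdLemmas

section Interlacing

variable {α : Type*} [LinearOrder α] {m : ℕ} {β : Fin (m + 1) → α} {η : Fin m → α}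

theorem strictMono_of_interlace (h : ∀ k, β k.castSucc < η k ∧ η k < β k.succ) : StrictMono β :=
  Fin.strictMono_iff_lt_succ.mpr fun k => (h k).1.trans (h k).2

theorem ne_of_interlace (h : ∀ k, β k.castSucc < η k ∧ η k < β k.succ) (k : Fin m)
    (i : Fin (m + 1)) : η k ≠ β i := by
  have hβ := (strictMono_of_interlace h).monotone
  rcases le_or_gt i k.castSucc with hle | hlt
  · exact ((hβ hle).trans_lt (h k).1).ne'
  · exact ((h k).2.trans_le (hβ (Fin.castSucc_lt_iff_succ_le.mp hlt))).ne

theorem pos_of_interlace [Zero α] (h : ∀ k, β k.castSucc < η k ∧ η k < β k.succ) (h0 : 0 < β 0) :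
    (∀ i, 0 < β i) ∧ ∀ k, 0 < η k := by
  have hβ : ∀ i, 0 < β i := fun i =>
    h0.trans_le ((strictMono_of_interlace h).monotone (Fin.zero_le i))
  exact ⟨hβ, fun k => (hβ _).trans (h k).1⟩

end Interlacing

theorem Function.Injective.sumElim_neg {ι κ : Type*} {f : ι → ℝ} {g : κ → ℝ}
    (hf : Function.Injective f) (hg : Function.Injective g) (hf0 : ∀ i, 0 < f i)
    (hg0 : ∀ j, 0 < g j) : Function.Injective (Sum.elim f (-g)) :=
  hf.sumElim (neg_injective.comp hg) fun i j h => by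
    linarith [hf0 i, hg0 j, show f i = -g j from h]

section HyperExponential

variable {m n : ℕ} {η : Fin m → ℝ} {ϑ : Fin n → ℝ} {β : Fin (m + 1) → ℝ} {γ : Fin (n + 1) → ℝ}

theorem partialFractionCoeff_sumElim_inl (hη : ∀ k, η k ≠ 0) (hϑ : ∀ k, ϑ k ≠ 0) (hβ : ∀ k, β k ≠ 0)
    (hγ : ∀ k, γ k ≠ 0) (i : Fin (m + 1)) :
    partialFractionCoeff (Sum.elim β (-γ)) (normalizedNodal (Sum.elim η (-ϑ))) (.inl i) =
      ((∏ k, (η k - β i)) * (∏ k ∈ Finset.univ.erase i, β k) *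
          (∏ k, (β i + ϑ k)) * (∏ k, γ k)) /
        ((∏ k, η k) * (∏ k ∈ Finset.univ.erase i, (β k - β i)) *
          (∏ k, ϑ k) * (∏ k, (β i + γ k))) := by
  simp only [partialFractionCoeff, eval_normalizedNodal, Fintype.prod_sum_type,
    Finset.prod_univ_erase_inl, Sum.elim_inl, Sum.elim_inr, Pi.neg_apply, div_neg, sub_neg_eq_add]
  rw [prod_one_sub_div _ _ fun k _ => hη k, prod_one_add_div _ _ fun k _ => hϑ k,
    prod_one_sub_div _ _ fun k _ => hβ k, prod_one_add_div _ _ fun k _ => hγ k]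
  simp only [div_eq_mul_inv, mul_inv, inv_inv]
  ring

theorem partialFractionCoeff_sumElim_inr (hη : ∀ k, η k ≠ 0) (hϑ : ∀ k, ϑ k ≠ 0) (hβ : ∀ k, β k ≠ 0)
    (hγ : ∀ k, γ k ≠ 0) (j : Fin (n + 1)) :
    partialFractionCoeff (Sum.elim β (-γ)) (normalizedNodal (Sum.elim η (-ϑ))) (.inr j) =
      ((∏ k, (ϑ k - γ j)) * (∏ k ∈ Finset.univ.erase j, γ k) *
          (∏ k, (γ j + η k)) * (∏ k, β k)) /
        ((∏ k, ϑ k) * (∏ k ∈ Finset.univ.erase j, (γ k - γ j)) *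
          (∏ k, η k) * (∏ k, (γ j + β k))) := by
  simp only [partialFractionCoeff, eval_normalizedNodal, Fintype.prod_sum_type,
    Finset.prod_univ_erase_inr, Sum.elim_inl, Sum.elim_inr, Pi.neg_apply, div_neg, neg_div,
    sub_neg_eq_add, ← sub_eq_add_neg]
  rw [prod_one_add_div _ _ fun k _ => hη k, prod_one_sub_div _ _ fun k _ => hϑ k,
    prod_one_add_div _ _ fun k _ => hβ k, prod_one_sub_div _ _ fun k _ => hγ k]
  simp only [div_eq_mul_inv, mul_inv, inv_inv]
  ring

end HyperExponential

theorem stmt_11_general (m n : ℕ)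
    (η : Fin m → ℝ) (ϑ : Fin n → ℝ)
    (β : Fin (m + 1) → ℝ) (γ : Fin (n + 1) → ℝ)
    (hβ0 : 0 < β 0)
    (hβint : ∀ k : Fin m, β k.castSucc < η k ∧ η k < β k.succ)
    (hγ0 : 0 < γ 0)
    (hγint : ∀ k : Fin n, γ k.castSucc < ϑ k ∧ ϑ k < γ k.succ)
    (U : Fin (m + 1) → ℝ)
    (hU : ∀ i, U i =
      ((∏ k, (η k - β i)) * (∏ k ∈ Finset.univ.erase i, β k) *
          (∏ k, (β i + ϑ k)) * (∏ k, γ k)) /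
        ((∏ k, η k) * (∏ k ∈ Finset.univ.erase i, (β k - β i)) *
          (∏ k, ϑ k) * (∏ k, (β i + γ k))))
    (V : Fin (n + 1) → ℝ)
    (hV : ∀ j, V j =
      -(((∏ k, (ϑ k - γ j)) * (∏ k ∈ Finset.univ.erase j, γ k) *
          (∏ k, (γ j + η k)) * (∏ k, β k)) /
        ((∏ k, ϑ k) * (∏ k ∈ Finset.univ.erase j, (γ k - γ j)) *
          (∏ k, η k) * (∏ k, (γ j + β k))))) :
    ((∑ i, U i) - (∑ j, V j) - 1 = 0) ∧
    ((∑ i, U i * β i) + (∑ j, V j * γ j) = 0) ∧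
    (∀ k : Fin n, (∑ i, U i * ϑ k / (ϑ k + β i)) - (∑ j, V j * ϑ k / (ϑ k - γ j)) - 1 = 0) ∧
    (∀ k : Fin m, (∑ i, U i * η k / (η k - β i)) - (∑ j, V j * η k / (η k + γ j)) - 1 = 0) := by
  obtain ⟨hβpos, hηpos⟩ := pos_of_interlace hβint hβ0
  obtain ⟨hγpos, hϑpos⟩ := pos_of_interlace hγint hγ0
  set x := Sum.elim β (-γ)
  set p := normalizedNodal (Sum.elim η (-ϑ))
  have hx : Function.Injective x := (strictMono_of_interlace hβint).injective.sumElim_neg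
    (strictMono_of_interlace hγint).injective hβpos hγpos
  have hx0 : ∀ s, x s ≠ 0 := by
    rintro (i | j)
    exacts [(hβpos i).ne', neg_ne_zero.mpr (hγpos j).ne']
  have hnatDeg : p.natDegree + 1 < Fintype.card (Fin (m + 1) ⊕ Fin (n + 1)) := by
    have : p.natDegree ≤ m + n := by simpa using natDegree_normalizedNodal_le (z := Sum.elim η (-ϑ))
    simp only [Fintype.card_sum, Fintype.card_fin]
    omega
  have hdeg : p.degree < Fintype.card (Fin (m + 1) ⊕ Fin (n + 1)) :=
    degree_le_natDegree.trans_lt (by exact_mod_cast hnatDeg.trans' (by omega))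
  have hp0 : p.eval 0 = 1 := by simp [p]
  have hUc : ∀ i, partialFractionCoeff x p (.inl i) = U i := fun i => by
    rw [hU, partialFractionCoeff_sumElim_inl (fun k => (hηpos k).ne') (fun k => (hϑpos k).ne')
      (fun k => (hβpos k).ne') (fun k => (hγpos k).ne')]
  have hVc : ∀ j, partialFractionCoeff x p (.inr j) = -V j := fun j => by
    rw [hV, neg_neg, partialFractionCoeff_sumElim_inr (fun k => (hηpos k).ne')
      (fun k => (hϑpos k).ne') (fun k => (hβpos k).ne') (fun k => (hγpos k).ne')]
  refine ⟨?_, ?_, fun k => ?_, fun k => ?_⟩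
  · have h := sum_partialFractionCoeff hx hx0 hdeg
    simp only [Fintype.sum_sum_type, hUc, hVc, sum_neg_distrib, hp0] at h
    linarith
  · have h := sum_partialFractionCoeff_mul_self hx hx0 hnatDeg
    simp only [Fintype.sum_sum_type, hUc, hVc, x, Sum.elim_inl, Sum.elim_inr, Pi.neg_apply,
      neg_mul_neg] at h
    linarith
  · have ha : ∀ s, -ϑ k ≠ x s := by
      rintro (i | j)
      · exact fun h => by linarith [hβpos i, hϑpos k, show -ϑ k = β i from h]
      · simpa [x] using ne_of_interlace hγint k j
    have h := sum_partialFractionCoeff_mul_div_sub_of_eval_eq_zero hx hx0 hdeg ha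
      (eval_normalizedNodal_eq_zero (z := Sum.elim η (-ϑ)) (Sum.inr k)
        (neg_ne_zero.mpr (hϑpos k).ne'))
    simp only [Fintype.sum_sum_type, hUc, hVc, x, Sum.elim_inl, Sum.elim_inr, Pi.neg_apply, hp0,
      mul_neg, ← neg_add', ← sub_eq_add_neg, neg_mul, neg_div, div_neg, sum_neg_distrib] at h
    linarith
  · have ha : ∀ s, η k ≠ x s := by
      rintro (i | j)
      · exact ne_of_interlace hβint k i
      · exact fun h => by linarith [hγpos j, hηpos k, show η k = -γ j from h]
    have h := sum_partialFractionCoeff_mul_div_sub_of_eval_eq_zero hx hx0 hdeg ha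
      (eval_normalizedNodal_eq_zero (z := Sum.elim η (-ϑ)) (Sum.inl k) (hηpos k).ne')
    simp only [Fintype.sum_sum_type, hUc, hVc, x, Sum.elim_inl, Sum.elim_inr, Pi.neg_apply, hp0,
      sub_neg_eq_add, neg_mul, neg_div, sum_neg_distrib] at h
    linarith

/-- The system of equations (3.20) from Remark 3.2, for the coefficients `Û_i`, `V̂_j`
of formula (3.15): (i) `∑_i Û_i − ∑_j V̂_j − 1 = 0`; (ii) `∑_i Û_i β_i + ∑_j V̂_j γ_j = 0`;
(iii) `∑_i Û_i ϑ_k/(ϑ_k + β_i) − ∑_j V̂_j ϑ_k/(ϑ_k − γ_j) − 1 = 0` for `k = 1, …, n`;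
(iv) `∑_i Û_i η_k/(η_k − β_i) − ∑_j V̂_j η_k/(η_k + γ_j) − 1 = 0` for `k = 1, …, m`. -/
theorem stmt_11 (m n : ℕ) (hm : 1 ≤ m) (hn : 1 ≤ n)
    (η : Fin m → ℝ) (ϑ : Fin n → ℝ)
    (β : Fin (m + 1) → ℝ) (γ : Fin (n + 1) → ℝ)
    (hβ0 : 0 < β 0)
    (hβint : ∀ k : Fin m, β k.castSucc < η k ∧ η k < β k.succ)
    (hγ0 : 0 < γ 0)
    (hγint : ∀ k : Fin n, γ k.castSucc < ϑ k ∧ ϑ k < γ k.succ)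
    (U : Fin (m + 1) → ℝ)
    (hU : ∀ i, U i =
      ((∏ k, (η k - β i)) * (∏ k ∈ Finset.univ.erase i, β k) *
          (∏ k, (β i + ϑ k)) * (∏ k, γ k)) /
        ((∏ k, η k) * (∏ k ∈ Finset.univ.erase i, (β k - β i)) *
          (∏ k, ϑ k) * (∏ k, (β i + γ k))))
    (V : Fin (n + 1) → ℝ)
    (hV : ∀ j, V j =
      -(((∏ k, (ϑ k - γ j)) * (∏ k ∈ Finset.univ.erase j, γ k) *
          (∏ k, (γ j + η k)) * (∏ k, β k)) /
        ((∏ k, ϑ k) * (∏ k ∈ Finset.univ.erase j, (γ k - γ j)) *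
          (∏ k, η k) * (∏ k, (γ j + β k))))) :
    ((∑ i, U i) - (∑ j, V j) - 1 = 0) ∧
    ((∑ i, U i * β i) + (∑ j, V j * γ j) = 0) ∧
    (∀ k : Fin n, (∑ i, U i * ϑ k / (ϑ k + β i)) - (∑ j, V j * ϑ k / (ϑ k - γ j)) - 1 = 0) ∧
    (∀ k : Fin m, (∑ i, U i * η k / (η k - β i)) - (∑ j, V j * η k / (η k + γ j)) - 1 = 0) :=
  stmt_11_general m n η ϑ β γ hβ0 hβint hγ0 hγint U hU V hV
end

section
/- Let E_1, …, E_{m+1}, M_1, …, M_{n+1}, h_1, …, h_{m+1} be real numbers and define f(x) = ∑_{i=1}^{m+1} E_i/(x − β̃_i) − ∑_{j=1}^{n+1} M_j/(x + γ̂_j) − ∑_{i=1}^{m+1} h_i/(x − β̂_i) for x not equal to any β̃_i or β̂_i and not equal to any −γ̂_j. Suppose that (a) f(η_k) = 0 for all k = 1, …, m; (b) f(−ϑ_k) = 0 for all k = 1, …, n; (c) ∑_{i=1}^{m+1} E_i = ∑_{i=1}^{m+1} h_i + ∑_{j=1}^{n+1} M_j; and (d) ∑_{i=1}^{m+1} E_i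 β̃_i = ∑_{i=1}^{m+1} h_i β̂_i − ∑_{j=1}^{n+1} M_j γ̂_j. Then for every x in the domain of f, f(x) = [∏_{i=1}^{m}(x − η_i) · ∏_{j=1}^{n}(x + ϑ_j)] / [∏_{i=1}^{m+1}(x − β̃_i) · ∏_{j=1}^{n+1}(x + γ̂_j)] · ∑_{i=1}^{m+1} [∏_{k=1}^{m+1}(β̂_i − β̃_k) · ∏_{k=1}^{n+1}(β̂_i + γ̂_k)] / [∏_{k=1}^{m}(β̂_i − η_k) · ∏_{k=1}^{n}(β̂_i + ϑ_k)] · (−h_i)/(x − β̂_i). -/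
/-!
Clearing denominators, `f(x) ∏(x - β̃_i) ∏(x + γ̂_j) ∏(x - β̂_i)` is a polynomial `N` of formal
degree `2m + n + 2`; the linear constraints (c) and (d) are exactly the vanishing of its two
top coefficients, so `deg N ≤ 2m + n`. The claimed right-hand side, cleared the same way, is
`∏(x - η_k) ∏(x + ϑ_k)` times a polynomial of degree `≤ m`. Both polynomials vanish at the
`η_k` and `-ϑ_k`, and at each `β̂_i` both equal
`-h_i ∏(β̂_i - β̃_k) ∏(β̂_i + γ̂_k) ∏_{k ≠ i}(β̂_i - β̂_k)`. Interlacing and positivity make these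
`2m + n + 1` points distinct, so the two polynomials coincide.
-/

open Polynomial Finset Lagrange

namespace Lagrange

section CommRing

variable {R ι : Type*} [CommRing R] [DecidableEq ι] (s : Finset ι) (v r : ι → R)

noncomputable def partialFractionNumerator : R[X] := ∑ i ∈ s, C (r i) * nodal (s.erase i) v

theorem coeff_partialFractionNumerator (d : ℕ) :
    (partialFractionNumerator s v r).coeff d =
      ∑ i ∈ s, r i * (nodal (s.erase i) v).coeff d := by
  simp only [partialFractionNumerator, finsetSum_coeff, coeff_C_mul]

theorem eval_partialFractionNumerator_at_node {i : ι} (hi : i ∈ s) :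
    (partialFractionNumerator s v r).eval (v i) = r i * (nodal (s.erase i) v).eval (v i) := by
  rw [partialFractionNumerator, eval_finsetSum, ← add_sum_erase _ _ hi, eval_mul, eval_C,
    add_eq_left]
  refine sum_eq_zero fun j hj => ?_
  rw [eval_mul, eval_nodal_at_node (mem_erase.mpr ⟨(mem_erase.mp hj).1.symm, hi⟩), mul_zero]

variable [Nontrivial R]

theorem degree_partialFractionNumerator_lt : (partialFractionNumerator s v r).degree < #s := by
  rw [← mem_degreeLT]
  refine Submodule.sum_mem _ fun i hi => ?_
  rw [← smul_eq_C_mul, mem_degreeLT]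
  refine (degree_smul_le _ _).trans_lt ?_
  rw [degree_nodal, card_erase_of_mem hi, Nat.cast_lt]
  exact Nat.sub_lt (card_pos.mpr ⟨i, hi⟩) one_pos

theorem degree_partialFractionNumerator_lt_card_sub_two (h₀ : ∑ i ∈ s, r i = 0)
    (h₁ : ∑ i ∈ s, r i * v i = 0) :
    (partialFractionNumerator s v r).degree < ↑(#s - 2) := by
  have hlt := degree_partialFractionNumerator_lt s v r
  rw [degree_lt_iff_coeff_zero] at hlt ⊢
  intro d hd
  rcases le_or_gt #s d with hsd | hds
  · exact hlt d hsd
  rw [coeff_partialFractionNumerator]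
  obtain hd₁ | hd₂ : d + 1 = #s ∨ d + 2 = #s := by omega
  · calc ∑ i ∈ s, r i * (nodal (s.erase i) v).coeff d = ∑ i ∈ s, r i := by
          refine sum_congr rfl fun i hi => ?_
          rw [← card_erase_add_one hi, add_left_inj] at hd₁
          rw [hd₁, ← natDegree_nodal (s := s.erase i) (v := v), nodal_monic.coeff_natDegree,
            mul_one]
      _ = 0 := h₀
  · calc ∑ i ∈ s, r i * (nodal (s.erase i) v).coeff d
          = ∑ i ∈ s, r i * (v i - ∑ j ∈ s, v j) := by
          refine sum_congr rfl fun i hi => ?_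
          have hcard : #(s.erase i) = d + 1 := by rw [card_erase_of_mem hi]; omega
          rw [show d = #(s.erase i) - 1 by omega, nodal_eq,
            prod_X_sub_C_coeff_card_pred _ _ (by omega), sum_erase_eq_sub hi]
          ring
      _ = ∑ i ∈ s, r i * v i - (∑ i ∈ s, r i) * ∑ j ∈ s, v j := by
          rw [sum_mul, ← sum_sub_distrib]
          exact sum_congr rfl fun i _ => by ring
      _ = 0 := by rw [h₀, h₁]; ring

end CommRing

theorem sum_div_mul_eval_nodal {K ι : Type*} [Field K] [DecidableEq ι] (s : Finset ι)
    (v r : ι → K) {x : K} (hx : ∀ i ∈ s, x ≠ v i) :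
    (∑ i ∈ s, r i / (x - v i)) * (nodal s v).eval x =
      (partialFractionNumerator s v r).eval x := by
  rw [partialFractionNumerator, eval_finsetSum, sum_mul]
  refine sum_congr rfl fun i hi => ?_
  rw [nodal_eq_mul_nodal_erase hi, eval_mul, eval_mul, eval_C, eval_sub, eval_X, eval_C,
    ← mul_assoc, div_mul_cancel₀ _ (sub_ne_zero.mpr (hx i hi))]

section Sum

variable {R κ ν : Type*} [CommRing R] [Fintype κ] [Fintype ν] (u : κ → R) (w : ν → R)

theorem nodal_sumElim : nodal univ (Sum.elim u w) = nodal univ u * nodal univ w := by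
  simp only [nodal, Fintype.prod_sum_type, Sum.elim_inl, Sum.elim_inr]

variable [IsDomain R] [DecidableEq κ] [DecidableEq ν]

theorem nodal_erase_inl (a : κ) :
    nodal (univ.erase (Sum.inl a)) (Sum.elim u w) = nodal (univ.erase a) u * nodal univ w := by
  refine mul_left_cancel₀ (X_sub_C_ne_zero (u a)) ?_
  have h := nodal_eq_mul_nodal_erase (v := Sum.elim u w) (mem_univ (Sum.inl a))
  rw [Sum.elim_inl] at h
  rw [← h, nodal_sumElim, ← mul_assoc, ← nodal_eq_mul_nodal_erase (mem_univ a)]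

theorem nodal_erase_inr (i : ν) :
    nodal (univ.erase (Sum.inr i)) (Sum.elim u w) = nodal univ u * nodal (univ.erase i) w := by
  refine mul_left_cancel₀ (X_sub_C_ne_zero (w i)) ?_
  have h := nodal_eq_mul_nodal_erase (v := Sum.elim u w) (mem_univ (Sum.inr i))
  rw [Sum.elim_inr] at h
  rw [← h, nodal_sumElim, mul_left_comm, ← nodal_eq_mul_nodal_erase (mem_univ i)]

theorem partialFractionNumerator_sumElim (r : κ → R) (ρ : ν → R) :
    partialFractionNumerator univ (Sum.elim u w) (Sum.elim r ρ) =
      partialFractionNumerator univ u r * nodal univ w +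
        nodal univ u * partialFractionNumerator univ w ρ := by
  simp only [partialFractionNumerator, Fintype.sum_sum_type, Sum.elim_inl, Sum.elim_inr,
    nodal_erase_inl, nodal_erase_inr, sum_mul, mul_sum, mul_assoc, mul_left_comm]

end Sum

section Determination

variable {K κ ν μ : Type*} [Field K] [Fintype κ] [Fintype ν] [Fintype μ] [DecidableEq κ]
  [DecidableEq ν] {u : κ → K} {w : ν → K} {z : μ → K} {r : κ → K} {ρ : ν → K}

theorem partialFractionNumerator_eq_nodal_mul (hcard : Fintype.card κ ≤ Fintype.card μ + 2)
    (hzw : Function.Injective (Sum.elim z w)) (hzu : ∀ k a, z k ≠ u a)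
    (h₀ : ∑ a, r a + ∑ i, ρ i = 0) (h₁ : ∑ a, r a * u a + ∑ i, ρ i * w i = 0)
    (hz : ∀ k, ∑ a, r a / (z k - u a) + ∑ i, ρ i / (z k - w i) = 0) :
    partialFractionNumerator univ (Sum.elim u w) (Sum.elim r ρ) =
      nodal univ z * partialFractionNumerator univ w
        (fun i => (nodal univ u).eval (w i) / (nodal univ z).eval (w i) * ρ i) := by
  refine eq_of_degree_sub_lt_of_eval_index_eq (v := Sum.elim z w) univ hzw.injOn ?_ ?_
  · refine (degree_sub_le _ _).trans_lt (max_lt ?_ ?_)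
    · refine (degree_partialFractionNumerator_lt_card_sub_two _ _ _ ?_ ?_).trans_le ?_
      · simpa only [Fintype.sum_sum_type, Sum.elim_inl, Sum.elim_inr] using h₀
      · simpa only [Fintype.sum_sum_type, Sum.elim_inl, Sum.elim_inr] using h₁
      · simp only [card_univ, Fintype.card_sum]
        exact_mod_cast (by omega)
    · rw [degree_mul, degree_nodal, card_univ, card_univ, Fintype.card_sum, Nat.cast_add]
      exact WithBot.add_lt_add_left (WithBot.natCast_ne_bot _)
        (degree_partialFractionNumerator_lt _ _ _)
  · rintro (k | i) -
    · have hk := sum_div_mul_eval_nodal univ (Sum.elim u w) (Sum.elim r ρ) (x := z k) ?_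
      · rw [Fintype.sum_sum_type] at hk
        simp only [Sum.elim_inl, Sum.elim_inr] at hk
        rw [Sum.elim_inl, ← hk, hz, zero_mul, eval_mul, eval_nodal_at_node (mem_univ k), zero_mul]
      · rintro (a | i) -
        · exact hzu k a
        · exact hzw.ne (a₁ := Sum.inl k) (a₂ := Sum.inr i) Sum.inl_ne_inr
    · have hZ : (nodal univ z).eval (w i) ≠ 0 := eval_nodal_not_at_node fun k _ =>
        hzw.ne (a₁ := Sum.inr i) (a₂ := Sum.inl k) Sum.inr_ne_inl
      rw [Sum.elim_inr, partialFractionNumerator_sumElim, eval_mul, eval_add, eval_mul, eval_mul,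
        eval_nodal_at_node (mem_univ i), eval_partialFractionNumerator_at_node _ _ _ (mem_univ i),
        eval_partialFractionNumerator_at_node _ _ _ (mem_univ i)]
      field_simp
      ring

theorem sum_div_sub_add_sum_div_sub_eq (hcard : Fintype.card κ ≤ Fintype.card μ + 2)
    (hzw : Function.Injective (Sum.elim z w)) (hzu : ∀ k a, z k ≠ u a)
    (h₀ : ∑ a, r a + ∑ i, ρ i = 0) (h₁ : ∑ a, r a * u a + ∑ i, ρ i * w i = 0)
    (hz : ∀ k, ∑ a, r a / (z k - u a) + ∑ i, ρ i / (z k - w i) = 0)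
    {x : K} (hxu : ∀ a, x ≠ u a) (hxw : ∀ i, x ≠ w i) :
    ∑ a, r a / (x - u a) + ∑ i, ρ i / (x - w i) =
      (nodal univ z).eval x / (nodal univ u).eval x *
        ∑ i, (nodal univ u).eval (w i) / (nodal univ z).eval (w i) * (ρ i / (x - w i)) := by
  have hU : (nodal univ u).eval x ≠ 0 := eval_nodal_not_at_node fun a _ => hxu a
  have hW : (nodal univ w).eval x ≠ 0 := eval_nodal_not_at_node fun i _ => hxw i
  have h := sum_div_mul_eval_nodal univ (Sum.elim u w) (Sum.elim r ρ) (x := x)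
    (by rintro (a | i) -; exacts [hxu a, hxw i])
  rw [partialFractionNumerator_eq_nodal_mul hcard hzw hzu h₀ h₁ hz, eval_mul,
    ← sum_div_mul_eval_nodal univ w _ fun i _ => hxw i, nodal_sumElim, eval_mul,
    Fintype.sum_sum_type] at h
  simp only [Sum.elim_inl, Sum.elim_inr, mul_div_assoc] at h
  rw [div_mul_eq_mul_div, eq_div_iff hU]
  exact mul_right_cancel₀ hW (by linear_combination h)

end Determination

end Lagrange

def Interlaces {α : Type*} [LT α] {p : ℕ} (v : Fin (p + 1) → α) (w : Fin p → α) : Prop :=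
  ∀ k : Fin p, v k.castSucc < w k ∧ w k < v k.succ

namespace Interlaces

section LinearOrder

variable {α : Type*} [LinearOrder α] {p : ℕ} {v : Fin (p + 1) → α} {w : Fin p → α}

theorem strictMono_left (h : Interlaces v w) : StrictMono v :=
  Fin.strictMono_iff_lt_succ.mpr fun k => (h k).1.trans (h k).2

theorem strictMono_right (h : Interlaces v w) : StrictMono w := fun k l hkl =>
  ((h k).2.trans_le (h.strictMono_left.monotone (Fin.succ_le_castSucc_iff.mpr hkl))).trans (h l).1

theorem left_ne_right (h : Interlaces v w) (i : Fin (p + 1)) (k : Fin p) : v i ≠ w k := by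
  rcases le_or_gt i k.castSucc with hik | hik
  · exact ((h.strictMono_left.monotone hik).trans_lt (h k).1).ne
  · exact ((h k).2.trans_le (h.strictMono_left.monotone (Fin.castSucc_lt_iff_succ_le.mp hik))).ne'

theorem left_zero_le (h : Interlaces v w) (i : Fin (p + 1)) : v 0 ≤ v i :=
  h.strictMono_left.monotone (Fin.zero_le i)

theorem left_zero_lt_right (h : Interlaces v w) (k : Fin p) : v 0 < w k :=
  (h.left_zero_le _).trans_lt (h k).1

end LinearOrder

section Real

variable {p q : ℕ} {v : Fin (p + 1) → ℝ} {w : Fin p → ℝ} {v' : Fin (q + 1) → ℝ}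
  {w' : Fin q → ℝ}

theorem sumElim_neg_ne (h : Interlaces v w) (h0 : 0 < v 0) (h' : Interlaces v' w')
    (h0' : 0 < v' 0) (k : Fin p ⊕ Fin q) (a : Fin (p + 1) ⊕ Fin (q + 1)) :
    Sum.elim w (fun l => -w' l) k ≠ Sum.elim v (fun j => -v' j) a := by
  rcases k with k | k <;> rcases a with i | j <;> simp only [Sum.elim_inl, Sum.elim_inr]
  · exact (h.left_ne_right i k).symm
  · linarith [h.left_zero_lt_right k, h'.left_zero_le j]
  · linarith [h'.left_zero_lt_right k, h.left_zero_le i]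
  · exact neg_injective.ne (h'.left_ne_right j k).symm

theorem injective_sumElim (h : Interlaces v w) (h0 : 0 < v 0)
    (h' : Interlaces v' w') (h0' : 0 < v' 0) :
    Function.Injective (Sum.elim (Sum.elim w fun l => -w' l) v) := by
  refine .sumElim (.sumElim h.strictMono_right.injective
    (neg_injective.comp h'.strictMono_right.injective) fun k l => ?_)
    h.strictMono_left.injective ?_
  · linarith [h.left_zero_lt_right k, h'.left_zero_lt_right l]
  · rintro (k | k) i <;> simp only [Sum.elim_inl, Sum.elim_inr]
    · exact (h.left_ne_right i k).symm
    · linarith [h'.left_zero_lt_right k, h.left_zero_le i]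

end Real

end Interlaces

theorem stmt_17_general (m n : ℕ)
    (η : Fin m → ℝ) (ϑ : Fin n → ℝ)
    (βt : Fin (m + 1) → ℝ) (βh : Fin (m + 1) → ℝ) (γ : Fin (n + 1) → ℝ)
    (hβt0 : 0 < βt 0)
    (hβtint : ∀ k : Fin m, βt k.castSucc < η k ∧ η k < βt k.succ)
    (hβh0 : 0 < βh 0)
    (hβhint : ∀ k : Fin m, βh k.castSucc < η k ∧ η k < βh k.succ)
    (hγ0 : 0 < γ 0)
    (hγint : ∀ k : Fin n, γ k.castSucc < ϑ k ∧ ϑ k < γ k.succ)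
    (E : Fin (m + 1) → ℝ) (M : Fin (n + 1) → ℝ) (h : Fin (m + 1) → ℝ)
    (f : ℝ → ℝ)
    (hf : ∀ x : ℝ, (∀ i, x ≠ βt i) → (∀ i, x ≠ βh i) → (∀ j, x ≠ -γ j) →
      f x = (∑ i, E i / (x - βt i)) - (∑ j, M j / (x + γ j)) - (∑ i, h i / (x - βh i)))
    (ha : ∀ k : Fin m, f (η k) = 0)
    (hb : ∀ k : Fin n, f (-ϑ k) = 0)
    (hc : (∑ i, E i) = (∑ i, h i) + (∑ j, M j))
    (hd : (∑ i, E i * βt i) = (∑ i, h i * βh i) - (∑ j, M j * γ j)) :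
    ∀ x : ℝ, (∀ i, x ≠ βt i) → (∀ i, x ≠ βh i) → (∀ j, x ≠ -γ j) →
      f x = (((∏ i, (x - η i)) * (∏ j, (x + ϑ j))) /
          ((∏ i, (x - βt i)) * (∏ j, (x + γ j)))) *
        (∑ i, (((∏ k, (βh i - βt k)) * (∏ k, (βh i + γ k))) /
            ((∏ k, (βh i - η k)) * (∏ k, (βh i + ϑ k)))) * (-h i / (x - βh i))) := by
  classical
  intro x hxt hxh hxγ
  -- poles `βt`, `-γ`, `βh` with residues `E`, `-M`, `-h`; zeros `η`, `-ϑ`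
  have hxu : ∀ a, x ≠ Sum.elim βt (fun j => -γ j) a := by rintro (i | j); exacts [hxt i, hxγ j]
  have hzu := Interlaces.sumElim_neg_ne hβtint hβt0 hγint hγ0
  have hzw := Interlaces.injective_sumElim hβhint hβh0 hγint hγ0
  have hF : ∀ y, (∀ a, y ≠ Sum.elim βt (fun j => -γ j) a) → (∀ i, y ≠ βh i) →
      f y = ∑ a, Sum.elim E (fun j => -M j) a / (y - Sum.elim βt (fun j => -γ j) a) +
        ∑ i, -h i / (y - βh i) := by
    intro y hyu hyh
    rw [hf y (fun i => hyu (.inl i)) hyh (fun j => hyu (.inr j)), Fintype.sum_sum_type]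
    simp only [Sum.elim_inl, Sum.elim_inr, neg_div, sum_neg_distrib, sub_neg_eq_add]
    ring
  have hcard : Fintype.card (Fin (m + 1) ⊕ Fin (n + 1)) ≤ Fintype.card (Fin m ⊕ Fin n) + 2 := by
    simp only [Fintype.card_sum, Fintype.card_fin]; omega
  rw [hF x hxu hxh, sum_div_sub_add_sum_div_sub_eq hcard hzw hzu ?_ ?_ ?_ hxu hxh]
  · simp only [nodal_sumElim, eval_mul, eval_nodal, sub_neg_eq_add]
  · simp only [Fintype.sum_sum_type, Sum.elim_inl, Sum.elim_inr, sum_neg_distrib]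
    linarith
  · simp only [Fintype.sum_sum_type, Sum.elim_inl, Sum.elim_inr, neg_mul, mul_neg, neg_neg,
      sum_neg_distrib]
    linarith
  · intro k
    rw [← hF _ (hzu k) fun i he => Sum.inl_ne_inr (hzw (a₁ := .inl k) (a₂ := .inr i) he)]
    rcases k with k | k
    exacts [ha k, hb k]

/-- The rational-function determination step (C.10)–(C.13) in the proof of Corollary 3.2:
if `f(x) = ∑_i E_i/(x − β̃_i) − ∑_j M_j/(x + γ̂_j) − ∑_i h_i/(x − β̂_i)` on its domain,
`f` vanishes at all `η_k` and `−ϑ_k`, and the linear constraints (C.9) hold, then `f`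
equals the stated rational function, whose residue at `β̂_i` is `−h_i`. -/
theorem stmt_17 (m n : ℕ) (hm : 1 ≤ m) (hn : 1 ≤ n)
    (η : Fin m → ℝ) (ϑ : Fin n → ℝ)
    (βt : Fin (m + 1) → ℝ) (βh : Fin (m + 1) → ℝ) (γ : Fin (n + 1) → ℝ)
    (hβt0 : 0 < βt 0)
    (hβtint : ∀ k : Fin m, βt k.castSucc < η k ∧ η k < βt k.succ)
    (hβh0 : 0 < βh 0)
    (hβhint : ∀ k : Fin m, βh k.castSucc < η k ∧ η k < βh k.succ)
    (hγ0 : 0 < γ 0)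
    (hγint : ∀ k : Fin n, γ k.castSucc < ϑ k ∧ ϑ k < γ k.succ)
    (hβtβh : ∀ i j, βt i ≠ βh j)
    (E : Fin (m + 1) → ℝ) (M : Fin (n + 1) → ℝ) (h : Fin (m + 1) → ℝ)
    (f : ℝ → ℝ)
    (hf : ∀ x : ℝ, (∀ i, x ≠ βt i) → (∀ i, x ≠ βh i) → (∀ j, x ≠ -γ j) →
      f x = (∑ i, E i / (x - βt i)) - (∑ j, M j / (x + γ j)) - (∑ i, h i / (x - βh i)))
    (ha : ∀ k : Fin m, f (η k) = 0)
    (hb : ∀ k : Fin n, f (-ϑ k) = 0)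
    (hc : (∑ i, E i) = (∑ i, h i) + (∑ j, M j))
    (hd : (∑ i, E i * βt i) = (∑ i, h i * βh i) - (∑ j, M j * γ j)) :
    ∀ x : ℝ, (∀ i, x ≠ βt i) → (∀ i, x ≠ βh i) → (∀ j, x ≠ -γ j) →
      f x = (((∏ i, (x - η i)) * (∏ j, (x + ϑ j))) /
          ((∏ i, (x - βt i)) * (∏ j, (x + γ j)))) *
        (∑ i, (((∏ k, (βh i - βt k)) * (∏ k, (βh i + γ k))) /
            ((∏ k, (βh i - η k)) * (∏ k, (βh i + ϑ k)))) * (-h i / (x - βh i))) :=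
  stmt_17_general m n η ϑ βt βh γ hβt0 hβtint hβh0 hβhint hγ0 hγint E M h f hf ha hb hc hd
end
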